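/- arXiv:1707.06171 — 7 statements merged into one kernel-verified Lean document; each statement's English description precedes it below -/
import Mathlib

section
/- Let a : ℝ → ℝ and f : ℝ → ℝ be continuous functions, and suppose there exist constants M > 0 and a₁ ≥ a₀ > 0 such that |f(t)| ≤ M and a₀ ≤ a(t) ≤ a₁ for all t ∈ ℝ. Then there exists a twice continuously differentiable function u : ℝ → ℝ satisfying u''(t) − a(t)·u(t)³ = f(t) for all t ∈ ℝ, which is uniformly bounded: there is a constant K > 0 with |u(t)| ≤ K for all t ∈ ℝ. -/
open Real MeasureTheory Set Filter intervalIntegral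
open scoped Topology

section Kernel

variable {c B t : ℝ} {F : ℝ → ℝ}

/-- exp (c*s) is integrable on `Iic t` for `c > 0`. -/
lemma intOn_exp_Iic (hc : 0 < c) (t : ℝ) :
    IntegrableOn (fun s : ℝ => exp (c * s)) (Iic t) := by
  refine integrableOn_Iic_of_intervalIntegral_norm_bounded (exp (c*t)/c) t
    (fun y => ((continuous_exp.comp (continuous_const.mul continuous_id)).integrableOn_Ioc))
    tendsto_id (Eventually.of_forall fun y => ?_)
  have h1 : ∀ x : ℝ, ‖exp (c*x)‖ = exp (c*x) := fun x => norm_of_nonneg (exp_pos _).le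
  simp_rw [h1]
  have h2 : ∀ u v : ℝ, HasDerivAt (fun x => exp (c*x)/c) (exp (c*v)) v := by
    intro u v
    simpa [mul_comm, mul_div_assoc, mul_div_cancel_left₀ _ hc.ne'] using
      (((hasDerivAt_id v).const_mul c).exp.div_const c)
  rw [intervalIntegral.integral_eq_sub_of_hasDerivAt (fun x _ => h2 0 x)
    ((continuous_exp.comp (continuous_const.mul continuous_id)).intervalIntegrable _ _)]
  rw [div_sub_div_same]
  gcongr
  linarith [exp_pos (c * (id y))]

lemma intOn_exp_neg_Ioi (hc : 0 < c) (t : ℝ) :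
    IntegrableOn (fun s : ℝ => exp (-(c * s))) (Ioi t) := by
  simpa [neg_mul] using exp_neg_integrableOn_Ioi t hc

lemma integral_exp_Iic' (hc : 0 < c) (t : ℝ) :
    ∫ s in Iic t, exp (c * s) = exp (c * t) / c := by
  have h2 : ∀ v : ℝ, v ∈ Iic t → HasDerivAt (fun x => exp (c*x)/c) (exp (c*v)) v := by
    intro v _
    simpa [mul_comm, mul_div_assoc, mul_div_cancel_left₀ _ hc.ne'] using
      (((hasDerivAt_id v).const_mul c).exp.div_const c)
  have h3 : Tendsto (fun x => exp (c*x)/c) atBot (𝓝 0) := by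
    have : Tendsto (fun x : ℝ => c * x) atBot atBot :=
      tendsto_id.const_mul_atBot hc
    simpa using (tendsto_exp_atBot.comp this).div_const c
  simpa using integral_Iic_of_hasDerivAt_of_tendsto' h2 (intOn_exp_Iic hc t) h3

lemma integral_exp_neg_Ioi' (hc : 0 < c) (t : ℝ) :
    ∫ s in Ioi t, exp (-(c * s)) = exp (-(c * t)) / c := by
  have h2 : ∀ v : ℝ, v ∈ Ici t → HasDerivAt (fun x => -(exp (-(c*x))/c)) (exp (-(c*v))) v := by
    intro v _
    have h0 : HasDerivAt (fun x : ℝ => -(c*x)) (-c) v := by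
      exact ((hasDerivAt_id v).const_mul c).neg.congr_deriv (by simp)
    have h := (h0.exp.div_const c).neg
    refine h.congr_deriv ?_
    field_simp
  have h3 : Tendsto (fun x => -(exp (-(c*x))/c)) atTop (𝓝 0) := by
    have h0 : Tendsto (fun x : ℝ => -(c * x)) atTop atBot :=
      tendsto_neg_atTop_atBot.comp (tendsto_id.const_mul_atTop hc)
    simpa using ((tendsto_exp_atBot.comp h0).div_const c).neg
  have := integral_Ioi_of_hasDerivAt_of_tendsto' h2 (intOn_exp_neg_Ioi hc t) h3
  simpa using this

end Kernel

section KernelOps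

variable {c B : ℝ} {F G : ℝ → ℝ}

lemma intA (hc : 0 < c) (hFm : Measurable F) (hFb : ∀ s, |F s| ≤ B) (t : ℝ) :
    IntegrableOn (fun s : ℝ => exp (c * s) * F s) (Iic t) := by
  refine Integrable.mono' ((intOn_exp_Iic hc t).const_mul B) ?_ (ae_of_all _ fun s => ?_)
  · exact ((measurable_exp.comp (measurable_const.mul measurable_id)).mul hFm).aestronglyMeasurable
  · rw [Real.norm_eq_abs, abs_mul, abs_of_pos (exp_pos _)]
    calc exp (c*s) * |F s| ≤ exp (c*s) * B := by
          exact mul_le_mul_of_nonneg_left (hFb s) (exp_pos _).le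
    _ = B * exp (c*s) := mul_comm _ _

lemma intB (hc : 0 < c) (hFm : Measurable F) (hFb : ∀ s, |F s| ≤ B) (t : ℝ) :
    IntegrableOn (fun s : ℝ => exp (-(c * s)) * F s) (Ioi t) := by
  refine Integrable.mono' ((intOn_exp_neg_Ioi hc t).const_mul B) ?_ (ae_of_all _ fun s => ?_)
  · exact ((measurable_exp.comp (measurable_const.mul measurable_id).neg).mul
      hFm).aestronglyMeasurable
  · rw [Real.norm_eq_abs, abs_mul, abs_of_pos (exp_pos _)]
    calc exp (-(c*s)) * |F s| ≤ exp (-(c*s)) * B := by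
          exact mul_le_mul_of_nonneg_left (hFb s) (exp_pos _).le
    _ = B * exp (-(c*s)) := mul_comm _ _

noncomputable def primA (c : ℝ) (F : ℝ → ℝ) (t : ℝ) : ℝ := ∫ s in Iic t, exp (c * s) * F s

noncomputable def primB (c : ℝ) (F : ℝ → ℝ) (t : ℝ) : ℝ := ∫ s in Ioi t, exp (-(c * s)) * F s

noncomputable def kerG (c : ℝ) (F : ℝ → ℝ) (t : ℝ) : ℝ :=
  (1/(2*c)) * (exp (-(c*t)) * primA c F t + exp (c*t) * primB c F t)

noncomputable def kerD (c : ℝ) (F : ℝ → ℝ) (t : ℝ) : ℝ :=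
  (1/2) * (-(exp (-(c*t)) * primA c F t) + exp (c*t) * primB c F t)

lemma primA_abs_le (hc : 0 < c) (hFm : Measurable F) (hFb : ∀ s, |F s| ≤ B) (t : ℝ) :
    |primA c F t| ≤ B * (exp (c*t) / c) := by
  have h := norm_integral_le_of_norm_le (μ := volume.restrict (Iic t))
    (f := fun s => exp (c*s) * F s) (g := fun s => B * exp (c*s))
    ((intOn_exp_Iic hc t).const_mul B) (ae_of_all _ fun s => by
      rw [Real.norm_eq_abs, abs_mul, abs_of_pos (exp_pos _), mul_comm]
      exact mul_le_mul_of_nonneg_right (hFb s) (exp_pos _).le)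
  rw [Real.norm_eq_abs] at h
  calc |primA c F t| ≤ ∫ s in Iic t, B * exp (c*s) := h
  _ = B * (exp (c*t) / c) := by rw [MeasureTheory.integral_const_mul, integral_exp_Iic' hc]

lemma primB_abs_le (hc : 0 < c) (hFm : Measurable F) (hFb : ∀ s, |F s| ≤ B) (t : ℝ) :
    |primB c F t| ≤ B * (exp (-(c*t)) / c) := by
  have h := norm_integral_le_of_norm_le (μ := volume.restrict (Ioi t))
    (f := fun s => exp (-(c*s)) * F s) (g := fun s => B * exp (-(c*s)))
    ((intOn_exp_neg_Ioi hc t).const_mul B) (ae_of_all _ fun s => by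
      rw [Real.norm_eq_abs, abs_mul, abs_of_pos (exp_pos _), mul_comm]
      exact mul_le_mul_of_nonneg_right (hFb s) (exp_pos _).le)
  rw [Real.norm_eq_abs] at h
  calc |primB c F t| ≤ ∫ s in Ioi t, B * exp (-(c*s)) := h
  _ = B * (exp (-(c*t)) / c) := by rw [MeasureTheory.integral_const_mul, integral_exp_neg_Ioi' hc]

lemma ker_abs_le (hc : 0 < c) (hFm : Measurable F) (hFb : ∀ s, |F s| ≤ B) (t : ℝ) :
    |kerG c F t| ≤ B / c^2 := by
  have hA := primA_abs_le hc hFm hFb t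
  have hB := primB_abs_le hc hFm hFb t
  have key : |kerG c F t| ≤ (1/(2*c)) *
      (exp (-(c*t)) * (B * (exp (c*t)/c)) + exp (c*t) * (B * (exp (-(c*t))/c))) := by
    rw [kerG, abs_mul, abs_of_pos (by positivity : (0:ℝ) < 1/(2*c))]
    refine mul_le_mul_of_nonneg_left ((abs_add_le _ _).trans ?_) (by positivity)
    rw [abs_mul, abs_mul, abs_of_pos (exp_pos _), abs_of_pos (exp_pos _)]
    exact add_le_add (mul_le_mul_of_nonneg_left hA (exp_pos _).le)
      (mul_le_mul_of_nonneg_left hB (exp_pos _).le)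
  refine key.trans (le_of_eq ?_)
  rw [exp_neg]
  field_simp
  ring

lemma ker_mono (hc : 0 < c) {BF BG : ℝ} (hFm : Measurable F) (hFb : ∀ s, |F s| ≤ BF)
    (hGm : Measurable G) (hGb : ∀ s, |G s| ≤ BG) (h : ∀ s, F s ≤ G s) (t : ℝ) :
    kerG c F t ≤ kerG c G t := by
  have h1 : primA c F t ≤ primA c G t :=
    setIntegral_mono_on (intA hc hFm hFb t) (intA hc hGm hGb t) measurableSet_Iic
      (fun s _ => mul_le_mul_of_nonneg_left (h s) (exp_pos _).le)
  have h2 : primB c F t ≤ primB c G t :=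
    setIntegral_mono_on (intB hc hFm hFb t) (intB hc hGm hGb t) measurableSet_Ioi
      (fun s _ => mul_le_mul_of_nonneg_left (h s) (exp_pos _).le)
  unfold kerG
  refine mul_le_mul_of_nonneg_left ?_ (by positivity)
  exact add_le_add (mul_le_mul_of_nonneg_left h1 (exp_pos _).le)
    (mul_le_mul_of_nonneg_left h2 (exp_pos _).le)

lemma integral_Ioi_sub_Ioi' {f : ℝ → ℝ} {a b : ℝ} (hab : a ≤ b) (ha : IntegrableOn f (Ioi a))
    (hb : IntegrableOn f (Ioi b)) :
    (∫ x in Ioi a, f x) - ∫ x in Ioi b, f x = ∫ x in a..b, f x := by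
  rw [intervalIntegral.integral_of_le hab, sub_eq_iff_eq_add, ← Ioc_union_Ioi_eq_Ioi hab,
    setIntegral_union (Ioc_disjoint_Ioi le_rfl) measurableSet_Ioi
      (ha.mono_set Ioc_subset_Ioi_self) hb]

lemma integral_Ioi_sub_Ioi {f : ℝ → ℝ} {a b : ℝ} (ha : IntegrableOn f (Ioi a))
    (hb : IntegrableOn f (Ioi b)) :
    (∫ x in Ioi a, f x) - ∫ x in Ioi b, f x = ∫ x in a..b, f x := by
  rcases le_total a b with hab | hab
  · exact integral_Ioi_sub_Ioi' hab ha hb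
  · rw [intervalIntegral.integral_symm, ← integral_Ioi_sub_Ioi' hab hb ha]; ring

lemma primA_eq (hc : 0 < c) (hFm : Measurable F) (hFb : ∀ s, |F s| ≤ B) (t : ℝ) :
    primA c F t = primA c F 0 + ∫ s in (0:ℝ)..t, exp (c*s) * F s := by
  have := integral_Iic_sub_Iic (intA hc hFm hFb 0) (intA hc hFm hFb t)
  unfold primA
  linarith

lemma primB_eq (hc : 0 < c) (hFm : Measurable F) (hFb : ∀ s, |F s| ≤ B) (t : ℝ) :
    primB c F t = primB c F 0 - ∫ s in (0:ℝ)..t, exp (-(c*s)) * F s := by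
  have := integral_Ioi_sub_Ioi (intB hc hFm hFb 0) (intB hc hFm hFb t)
  unfold primB
  linarith

lemma intervalInt_A (hc : 0 < c) (hFm : Measurable F) (hFb : ∀ s, |F s| ≤ B) (a b : ℝ) :
    IntervalIntegrable (fun s => exp (c*s) * F s) volume a b := by
  rw [intervalIntegrable_iff]
  exact (intA hc hFm hFb (max a b)).mono_set fun x hx => hx.2

lemma intervalInt_B (hc : 0 < c) (hFm : Measurable F) (hFb : ∀ s, |F s| ≤ B) (a b : ℝ) :
    IntervalIntegrable (fun s => exp (-(c*s)) * F s) volume a b := by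
  rw [intervalIntegrable_iff]
  refine (intB hc hFm hFb (min a b - 1)).mono_set fun x hx => ?_
  have h1 : min a b < x := hx.1
  exact mem_Ioi.mpr (by linarith)

lemma primA_cont (hc : 0 < c) (hFm : Measurable F) (hFb : ∀ s, |F s| ≤ B) :
    Continuous (primA c F) := by
  rw [show primA c F = fun t => primA c F 0 + ∫ s in (0:ℝ)..t, exp (c*s) * F s from
    funext (primA_eq hc hFm hFb)]
  exact continuous_const.add
    (intervalIntegral.continuous_primitive (fun a b => intervalInt_A hc hFm hFb a b) 0)

lemma primB_cont (hc : 0 < c) (hFm : Measurable F) (hFb : ∀ s, |F s| ≤ B) :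
    Continuous (primB c F) := by
  rw [show primB c F = fun t => primB c F 0 - ∫ s in (0:ℝ)..t, exp (-(c*s)) * F s from
    funext (primB_eq hc hFm hFb)]
  exact continuous_const.sub
    (intervalIntegral.continuous_primitive (fun a b => intervalInt_B hc hFm hFb a b) 0)

lemma ker_cont (hc : 0 < c) (hFm : Measurable F) (hFb : ∀ s, |F s| ≤ B) :
    Continuous (kerG c F) := by
  exact continuous_const.mul
    (((continuous_exp.comp (continuous_const.mul continuous_id).neg).mul
        (primA_cont hc hFm hFb)).add
      ((continuous_exp.comp (continuous_const.mul continuous_id)).mul (primB_cont hc hFm hFb)))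

end KernelOps

section KernelDeriv

variable {c B : ℝ} {F : ℝ → ℝ}

lemma primA_hasDeriv (hc : 0 < c) (hFc : Continuous F) (hFb : ∀ s, |F s| ≤ B) (t : ℝ) :
    HasDerivAt (primA c F) (exp (c*t) * F t) t := by
  rw [show primA c F = fun t => primA c F 0 + ∫ s in (0:ℝ)..t, exp (c*s) * F s from
    funext (primA_eq hc hFc.measurable hFb)]
  have hcont : Continuous fun s => exp (c*s) * F s :=
    (continuous_exp.comp (continuous_const.mul continuous_id)).mul hFc
  exact ((intervalIntegral.integral_hasDerivAt_right
    (intervalInt_A hc hFc.measurable hFb 0 t)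
    (hcont.stronglyMeasurableAtFilter _ _) hcont.continuousAt).const_add _)

lemma primB_hasDeriv (hc : 0 < c) (hFc : Continuous F) (hFb : ∀ s, |F s| ≤ B) (t : ℝ) :
    HasDerivAt (primB c F) (-(exp (-(c*t)) * F t)) t := by
  rw [show primB c F = fun t => primB c F 0 - ∫ s in (0:ℝ)..t, exp (-(c*s)) * F s from
    funext (primB_eq hc hFc.measurable hFb)]
  have hcont : Continuous fun s => exp (-(c*s)) * F s :=
    (continuous_exp.comp (continuous_const.mul continuous_id).neg).mul hFc
  exact ((intervalIntegral.integral_hasDerivAt_right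
    (intervalInt_B hc hFc.measurable hFb 0 t)
    (hcont.stronglyMeasurableAtFilter _ _) hcont.continuousAt).const_sub _)

lemma expc_hasDeriv (c t : ℝ) : HasDerivAt (fun t : ℝ => exp (c*t)) (c * exp (c*t)) t := by
  simpa [mul_comm] using ((hasDerivAt_id t).const_mul c).exp

lemma expnc_hasDeriv (c t : ℝ) :
    HasDerivAt (fun t : ℝ => exp (-(c*t))) (-c * exp (-(c*t))) t := by
  simpa [mul_comm] using (((hasDerivAt_id t).const_mul c).neg).exp

lemma kerG_hasDeriv (hc : 0 < c) (hFc : Continuous F) (hFb : ∀ s, |F s| ≤ B) (t : ℝ) :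
    HasDerivAt (kerG c F) (kerD c F t) t := by
  have hA := primA_hasDeriv hc hFc hFb t
  have hB := primB_hasDeriv hc hFc hFb t
  have h := (((expnc_hasDeriv c t).mul hA).add ((expc_hasDeriv c t).mul hB)).const_mul (1/(2*c))
  refine h.congr_deriv ?_
  unfold kerD
  rw [exp_neg]
  field_simp
  ring

lemma kerD_hasDeriv (hc : 0 < c) (hFc : Continuous F) (hFb : ∀ s, |F s| ≤ B) (t : ℝ) :
    HasDerivAt (kerD c F) (c^2 * kerG c F t - F t) t := by
  have hA := primA_hasDeriv hc hFc hFb t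
  have hB := primB_hasDeriv hc hFc hFb t
  have h := ((((expnc_hasDeriv c t).mul hA).neg).add ((expc_hasDeriv c t).mul hB)).const_mul
    ((1:ℝ)/2)
  refine h.congr_deriv ?_
  unfold kerG
  rw [exp_neg]
  field_simp
  ring

lemma kerG_deriv (hc : 0 < c) (hFc : Continuous F) (hFb : ∀ s, |F s| ≤ B) :
    deriv (kerG c F) = kerD c F :=
  funext fun t => (kerG_hasDeriv hc hFc hFb t).deriv

lemma kerD_deriv (hc : 0 < c) (hFc : Continuous F) (hFb : ∀ s, |F s| ≤ B) :
    deriv (kerD c F) = fun t => c^2 * kerG c F t - F t :=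
  funext fun t => (kerD_hasDeriv hc hFc hFb t).deriv

lemma kerG_deriv2 (hc : 0 < c) (hFc : Continuous F) (hFb : ∀ s, |F s| ≤ B) (t : ℝ) :
    deriv (deriv (kerG c F)) t = c^2 * kerG c F t - F t := by
  rw [kerG_deriv hc hFc hFb, kerD_deriv hc hFc hFb]

lemma kerG_contDiff (hc : 0 < c) (hFc : Continuous F) (hFb : ∀ s, |F s| ≤ B) :
    ContDiff ℝ 2 (kerG c F) := by
  rw [show (2 : WithTop ℕ∞) = 1 + 1 by norm_num, contDiff_succ_iff_deriv]
  refine ⟨fun t => (kerG_hasDeriv hc hFc hFb t).differentiableAt, by simp, ?_⟩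
  rw [kerG_deriv hc hFc hFb, contDiff_one_iff_deriv]
  refine ⟨fun t => (kerD_hasDeriv hc hFc hFb t).differentiableAt, ?_⟩
  rw [kerD_deriv hc hFc hFb]
  exact (continuous_const.mul (ker_cont hc hFc.measurable hFb)).sub hFc

end KernelDeriv

set_option maxHeartbeats 1000000 in
/-- If `a, f : ℝ → ℝ` are continuous, `|f t| ≤ M` and
`a₀ ≤ a t ≤ a₁` for all `t` with `M > 0`, `0 < a₀ ≤ a₁`, then the equation
`u'' - a(t) u³ = f(t)` has a classical solution on `ℝ` that is uniformly bounded. -/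
theorem stmt0 (a f : ℝ → ℝ) (ha_cont : Continuous a) (hf_cont : Continuous f)
    (M a₀ a₁ : ℝ) (hM : 0 < M) (ha₀ : 0 < a₀) (ha₀₁ : a₀ ≤ a₁)
    (hf : ∀ t : ℝ, |f t| ≤ M) (ha : ∀ t : ℝ, a₀ ≤ a t ∧ a t ≤ a₁) :
    ∃ u : ℝ → ℝ, ContDiff ℝ 2 u ∧
      (∀ t : ℝ, deriv (deriv u) t - a t * u t ^ 3 = f t) ∧
      ∃ K > (0 : ℝ), ∀ t : ℝ, |u t| ≤ K := by
  -- constants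
  set β : ℝ := max 1 (M / a₀) with hβdef
  have hβ1 : (1:ℝ) ≤ β := le_max_left _ _
  have hβ0 : (0:ℝ) < β := lt_of_lt_of_le one_pos hβ1
  have hMβ : M ≤ a₀ * β^3 := by
    have h1 : M / a₀ ≤ β := le_max_right _ _
    have h2 : β ≤ β^3 := by
      nlinarith [mul_nonneg (mul_nonneg hβ0.le (by linarith : (0:ℝ) ≤ β - 1))
        (by linarith : (0:ℝ) ≤ β + 1)]
    have h3 : M ≤ a₀ * β := by
      rw [div_le_iff₀ ha₀] at h1
      nlinarith
    nlinarith
  have ha₁ : (0:ℝ) < a₁ := lt_of_lt_of_le ha₀ ha₀₁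
  set lam : ℝ := 3 * a₁ * β^2 with hlamdef
  have hlam : 0 < lam := by positivity
  set c : ℝ := Real.sqrt lam with hcdef
  have hc : 0 < c := Real.sqrt_pos.mpr hlam
  have hc2 : c^2 = lam := Real.sq_sqrt hlam.le
  -- the nonlinearity
  set g : ℝ → ℝ → ℝ := fun t x => lam * x - a t * x^3 - f t with hgdef
  have hg_bound : ∀ t x, |x| ≤ β → |g t x| ≤ lam * β := by
    intro t x hx
    obtain ⟨h1, h2⟩ := ha t
    have h3 := hf t
    rw [abs_le] at hx h3 ⊢
    have hx2 : x^2 ≤ β^2 := by nlinarith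
    have hq2 : β^2 + β*x + x^2 ≤ 3*β^2 := by nlinarith
    have hq3 : 0 ≤ β^2 + β*x + x^2 := by nlinarith [sq_nonneg (2*x + β)]
    have hq2' : β^2 - β*x + x^2 ≤ 3*β^2 := by nlinarith
    have hq3' : 0 ≤ β^2 - β*x + x^2 := by nlinarith [sq_nonneg (2*x - β)]
    have ha0t : (0:ℝ) < a t := lt_of_lt_of_le ha₀ h1
    have hq4 : a t * (β^2 + β*x + x^2) ≤ lam := by
      calc a t * (β^2 + β*x + x^2) ≤ a₁ * (β^2 + β*x + x^2) :=
            mul_le_mul_of_nonneg_right h2 hq3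
      _ ≤ a₁ * (3*β^2) := mul_le_mul_of_nonneg_left hq2 ha₁.le
      _ = lam := by rw [hlamdef]; ring
    have hq4' : a t * (β^2 - β*x + x^2) ≤ lam := by
      calc a t * (β^2 - β*x + x^2) ≤ a₁ * (β^2 - β*x + x^2) :=
            mul_le_mul_of_nonneg_right h2 hq3'
      _ ≤ a₁ * (3*β^2) := mul_le_mul_of_nonneg_left hq2' ha₁.le
      _ = lam := by rw [hlamdef]; ring
    have hq5 : a₀ * β^3 ≤ a t * β^3 := mul_le_mul_of_nonneg_right h1 (by positivity)
    constructor
    · -- -(lam*β) ≤ g t x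
      have key : 0 ≤ (x + β) * (lam - a t * (β^2 - β*x + x^2)) :=
        mul_nonneg (by linarith [hx.1]) (by linarith)
      simp only [hgdef]
      nlinarith
    · -- g t x ≤ lam*β
      have key : 0 ≤ (β - x) * (lam - a t * (β^2 + β*x + x^2)) :=
        mul_nonneg (by linarith [hx.2]) (by linarith)
      simp only [hgdef]
      nlinarith
  have hg_mono : ∀ t x y, -β ≤ x → x ≤ y → y ≤ β → g t x ≤ g t y := by
    intro t x y h1 h2 h3
    obtain ⟨ha1, ha2⟩ := ha t
    have hx2 : x^2 ≤ β^2 := by nlinarith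
    have hy2 : y^2 ≤ β^2 := by nlinarith
    have hxy : x*y ≤ β^2 := by nlinarith [sq_nonneg (x - y)]
    have hq : x^2 + x*y + y^2 ≤ 3*β^2 := by linarith
    have hq0 : 0 ≤ x^2 + x*y + y^2 := by nlinarith [sq_nonneg (x + y), sq_nonneg x, sq_nonneg y]
    have hq4 : a t * (x^2 + x*y + y^2) ≤ lam := by
      calc a t * (x^2 + x*y + y^2) ≤ a₁ * (x^2 + x*y + y^2) :=
            mul_le_mul_of_nonneg_right ha2 hq0
      _ ≤ a₁ * (3*β^2) := mul_le_mul_of_nonneg_left hq ha₁.le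
      _ = lam := by rw [hlamdef]; ring
    have key : 0 ≤ (y - x) * (lam - a t * (x^2 + x*y + y^2)) :=
      mul_nonneg (by linarith) (by linarith)
    simp only [hgdef]
    nlinarith
  -- continuity/measurability of composed nonlinearity
  have hGc : ∀ v : ℝ → ℝ, Continuous v → Continuous (fun s => g s (v s)) := by
    intro v hv
    simp only [hgdef]
    exact ((continuous_const.mul hv).sub (ha_cont.mul (hv.pow 3))).sub hf_cont
  -- the iteration
  set T : (ℝ → ℝ) → ℝ → ℝ := fun v t => kerG c (fun s => g s (v s)) t with hTdef
  set U : ℕ → ℝ → ℝ := fun n => T^[n] (fun _ => β) with hUdef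
  have hU0 : U 0 = fun _ => β := rfl
  have hUsucc : ∀ n, U (n+1) = T (U n) := fun n => Function.iterate_succ_apply' T n _
  have hlamββ : lam * β / c^2 = β := by rw [hc2]; field_simp
  have hInv : ∀ n, Continuous (U n) ∧ ∀ t, |U n t| ≤ β := by
    intro n
    induction n with
    | zero => exact ⟨continuous_const, fun t => by rw [hU0, abs_of_pos hβ0]⟩
    | succ n ih =>
      obtain ⟨hc1, hb1⟩ := ih
      have hGcn := hGc (U n) hc1
      have hGbn : ∀ s, |g s (U n s)| ≤ lam * β := fun s => hg_bound s _ (hb1 s)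
      rw [hUsucc n]
      refine ⟨ker_cont hc hGcn.measurable hGbn, fun t => ?_⟩
      have h := ker_abs_le hc hGcn.measurable hGbn t
      rwa [hlamββ] at h
  have hAnti : ∀ n t, U (n+1) t ≤ U n t := by
    intro n
    induction n with
    | zero =>
      intro t
      have h := (hInv 1).2 t
      calc U 1 t ≤ β := (abs_le.1 h).2
      _ = U 0 t := by rw [hU0]
    | succ n ih =>
      intro t
      have step : kerG c (fun s => g s (U (n+1) s)) t ≤ kerG c (fun s => g s (U n s)) t :=
        ker_mono hc (hGc _ (hInv (n+1)).1).measurable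
          (fun s => hg_bound s _ ((hInv (n+1)).2 s))
          (hGc _ (hInv n).1).measurable (fun s => hg_bound s _ ((hInv n).2 s))
          (fun s => hg_mono s _ _ (abs_le.1 ((hInv (n+1)).2 s)).1 (ih s)
            (abs_le.1 ((hInv n).2 s)).2) t
      calc U (n+1+1) t = T (U (n+1)) t := by rw [hUsucc]
      _ ≤ T (U n) t := step
      _ = U (n+1) t := (congrFun (hUsucc n) t).symm
  -- the limit
  set w : ℝ → ℝ := fun t => ⨅ n, U n t with hwdef
  have hmono : ∀ t, Antitone fun n => U n t := fun t =>
    antitone_nat_of_succ_le fun n => hAnti n t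
  have hbdd : ∀ t, BddBelow (Set.range fun n => U n t) := fun t =>
    ⟨-β, by rintro x ⟨n, rfl⟩; exact (abs_le.1 ((hInv n).2 t)).1⟩
  have htend : ∀ t, Filter.Tendsto (fun n => U n t) Filter.atTop (𝓝 (w t)) := fun t =>
    tendsto_atTop_ciInf (hmono t) (hbdd t)
  have hwb : ∀ t, |w t| ≤ β := by
    intro t
    rw [abs_le]
    constructor
    · exact le_ciInf fun n => (abs_le.1 ((hInv n).2 t)).1
    · exact (ciInf_le (hbdd t) 0).trans (le_of_eq (by rw [hU0]))
  have hwm : Measurable w :=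
    measurable_of_tendsto_metrizable (fun n => (hInv n).1.measurable)
      (tendsto_pi_nhds.2 htend)
  set Gw : ℝ → ℝ := fun s => g s (w s) with hGwdef
  have hGwm : Measurable Gw := by
    simp only [hGwdef, hgdef]
    exact ((measurable_const.mul hwm).sub (ha_cont.measurable.mul (hwm.pow_const 3))).sub
      hf_cont.measurable
  have hGwb : ∀ s, |Gw s| ≤ lam * β := fun s => hg_bound s _ (hwb s)
  have hGconv : ∀ s, Filter.Tendsto (fun n => g s (U n s)) Filter.atTop (𝓝 (Gw s)) := by
    intro s
    have hgx : Continuous fun x : ℝ => lam * x - a s * x^3 - f s :=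
      ((continuous_const.mul continuous_id).sub
        (continuous_const.mul (continuous_id.pow 3))).sub continuous_const
    simp only [hGwdef, hgdef]
    exact (hgx.tendsto (w s)).comp (htend s)
  have hfix : ∀ t, w t = kerG c Gw t := by
    intro t
    have h1 : Filter.Tendsto (fun n => U (n+1) t) Filter.atTop (𝓝 (w t)) :=
      (htend t).comp (Filter.tendsto_add_atTop_nat 1)
    have hAconv : Filter.Tendsto (fun n => primA c (fun s => g s (U n s)) t)
        Filter.atTop (𝓝 (primA c Gw t)) := by
      refine MeasureTheory.tendsto_integral_of_dominated_convergence
        (fun s => Real.exp (c*s) * (lam*β))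
        (fun n => ((Real.continuous_exp.comp (continuous_const.mul continuous_id)).mul
          (hGc _ (hInv n).1)).aestronglyMeasurable) ((intOn_exp_Iic hc t).mul_const _)
        (fun n => MeasureTheory.ae_of_all _ fun s => ?_) (MeasureTheory.ae_of_all _ fun s => ?_)
      · rw [Real.norm_eq_abs, abs_mul, abs_of_pos (Real.exp_pos _)]
        exact mul_le_mul_of_nonneg_left (hg_bound s _ ((hInv n).2 s)) (Real.exp_pos _).le
      · exact (hGconv s).const_mul _
    have hBconv : Filter.Tendsto (fun n => primB c (fun s => g s (U n s)) t)
        Filter.atTop (𝓝 (primB c Gw t)) := by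
      refine MeasureTheory.tendsto_integral_of_dominated_convergence
        (fun s => Real.exp (-(c*s)) * (lam*β))
        (fun n => ((Real.continuous_exp.comp (continuous_const.mul continuous_id).neg).mul
          (hGc _ (hInv n).1)).aestronglyMeasurable) ((intOn_exp_neg_Ioi hc t).mul_const _)
        (fun n => MeasureTheory.ae_of_all _ fun s => ?_) (MeasureTheory.ae_of_all _ fun s => ?_)
      · rw [Real.norm_eq_abs, abs_mul, abs_of_pos (Real.exp_pos _)]
        exact mul_le_mul_of_nonneg_left (hg_bound s _ ((hInv n).2 s)) (Real.exp_pos _).le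
      · exact (hGconv s).const_mul _
    have h2 : Filter.Tendsto (fun n => T (U n) t) Filter.atTop (𝓝 (kerG c Gw t)) := by
      simp only [hTdef, kerG]
      exact (((hAconv.const_mul _).add (hBconv.const_mul _)).const_mul _)
    have h3 : (fun n => U (n+1) t) = fun n => T (U n) t := funext fun n => by rw [hUsucc n]
    rw [h3] at h1
    exact tendsto_nhds_unique h1 h2
  have hweq : w = kerG c Gw := funext hfix
  have hwcont : Continuous w := by rw [hweq]; exact ker_cont hc hGwm hGwb
  have hGwc : Continuous Gw := by
    simp only [hGwdef]
    exact hGc w hwcont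
  refine ⟨w, ?_, ?_, β, hβ0, hwb⟩
  · rw [hweq]
    exact kerG_contDiff hc hGwc hGwb
  · intro t
    have h4 := kerG_deriv2 hc hGwc hGwb t
    rw [hweq, h4, ← hfix t, hc2]
    simp only [hGwdef, hgdef]
    ring
end

section
/- Let a : ℝ → ℝ and f : ℝ → ℝ be continuous functions, and suppose there exist constants M > 0 and a₁ ≥ a₀ > 0 such that |f(t)| ≤ M and a₀ ≤ a(t) ≤ a₁ for all t ∈ ℝ. If u and ũ are two twice continuously differentiable functions on ℝ, both uniformly bounded, and both satisfying u''(t) − a(t)·u(t)³ = f(t) for all t ∈ ℝ, then u = ũ. -/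
/-- A bounded differentiable function on ℝ whose derivative is monotone
has zero derivative everywhere. -/
lemma aux_deriv_zero (g : ℝ → ℝ) (hg : Differentiable ℝ g)
    (hmono : Monotone (deriv g)) (B : ℝ) (hB : ∀ t, |g t| ≤ B) :
    ∀ t, deriv g t = 0 := by
  intro t₀
  by_contra h
  rcases lt_or_gt_of_ne h with hneg | hpos
  · -- deriv g t₀ < 0 : go to -∞
    set c := deriv g t₀ with hc
    set T := t₀ - ((2 * B + 1) / (-c) + 1) with hT
    have hb : 0 ≤ B := le_trans (abs_nonneg _) (hB 0)
    have hnc : 0 < -c := by linarith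
    have hTlt : T < t₀ := by
      have h1 : 0 ≤ (2 * B + 1) / (-c) := div_nonneg (by linarith) (le_of_lt hnc)
      simp [hT]; linarith
    obtain ⟨ξ, hξ, hslope⟩ := exists_deriv_eq_slope g hTlt
      (hg.continuous.continuousOn) (hg.differentiableOn)
    have hξle : ξ ≤ t₀ := le_of_lt hξ.2
    have h1 : deriv g ξ ≤ c := hmono hξle
    have h2 : (g t₀ - g T) / (t₀ - T) ≤ c := hslope ▸ h1
    have hden : 0 < t₀ - T := by linarith
    have h3 : g t₀ - g T ≤ c * (t₀ - T) := by
      rw [div_le_iff₀ hden] at h2; linarith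
    have key : c * ((2 * B + 1) / (-c)) = -(2 * B + 1) := by
      rw [← mul_div_assoc, show c * (2 * B + 1) = (-c) * (-(2 * B + 1)) by ring]
      exact mul_div_cancel_left₀ _ (ne_of_gt hnc)
    have hTT : t₀ - T = (2 * B + 1) / (-c) + 1 := by rw [hT]; ring
    have h4 : c * (t₀ - T) = -(2 * B + 1) + c := by
      rw [hTT, mul_add, mul_one, key]
    have h5 := abs_le.mp (hB t₀)
    have h6 := abs_le.mp (hB T)
    linarith
  · -- deriv g t₀ > 0 : go to +∞
    set c := deriv g t₀ with hc
    set T := t₀ + ((2 * B + 1) / c + 1) with hT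
    have hb : 0 ≤ B := le_trans (abs_nonneg _) (hB 0)
    have hTgt : t₀ < T := by
      have h1 : 0 ≤ (2 * B + 1) / c := div_nonneg (by linarith) (le_of_lt hpos)
      simp [hT]; linarith
    obtain ⟨ξ, hξ, hslope⟩ := exists_deriv_eq_slope g hTgt
      (hg.continuous.continuousOn) (hg.differentiableOn)
    have h1 : c ≤ deriv g ξ := hmono (le_of_lt hξ.1)
    have h2 : c ≤ (g T - g t₀) / (T - t₀) := hslope ▸ h1
    have hden : 0 < T - t₀ := by linarith
    have h3 : c * (T - t₀) ≤ g T - g t₀ := by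
      rw [le_div_iff₀ hden] at h2; linarith
    have key : c * ((2 * B + 1) / c) = 2 * B + 1 := by
      rw [← mul_div_assoc]
      exact mul_div_cancel_left₀ _ (ne_of_gt hpos)
    have hTT : T - t₀ = (2 * B + 1) / c + 1 := by rw [hT]; ring
    have h4 : c * (T - t₀) = (2 * B + 1) + c := by
      rw [hTT, mul_add, mul_one, key]
    have h5 := abs_le.mp (hB t₀)
    have h6 := abs_le.mp (hB T)
    linarith

/-- Uniqueness of the uniformly bounded solution of
`u'' - a(t) u³ = f(t)` on `ℝ`. -/
theorem stmt1 (a f : ℝ → ℝ) (ha_cont : Continuous a) (hf_cont : Continuous f)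
    (M a₀ a₁ : ℝ) (hM : 0 < M) (ha₀ : 0 < a₀) (ha₀₁ : a₀ ≤ a₁)
    (hf : ∀ t : ℝ, |f t| ≤ M) (ha : ∀ t : ℝ, a₀ ≤ a t ∧ a t ≤ a₁)
    (u v : ℝ → ℝ) (hu : ContDiff ℝ 2 u) (hv : ContDiff ℝ 2 v)
    (hubdd : ∃ K > (0 : ℝ), ∀ t : ℝ, |u t| ≤ K)
    (hvbdd : ∃ K > (0 : ℝ), ∀ t : ℝ, |v t| ≤ K)
    (hueq : ∀ t : ℝ, deriv (deriv u) t - a t * u t ^ 3 = f t)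
    (hveq : ∀ t : ℝ, deriv (deriv v) t - a t * v t ^ 3 = f t) :
    u = v := by
  obtain ⟨Ku, hKu, hKub⟩ := hubdd
  obtain ⟨Kv, hKv, hKvb⟩ := hvbdd
  -- regularity facts
  have hu' : Differentiable ℝ u ∧ Differentiable ℝ (deriv u) := by
    rw [show (2 : WithTop ℕ∞) = 1 + 1 from rfl, contDiff_succ_iff_deriv] at hu
    exact ⟨hu.1, hu.2.2.differentiable one_ne_zero⟩
  have hv' : Differentiable ℝ v ∧ Differentiable ℝ (deriv v) := by
    rw [show (2 : WithTop ℕ∞) = 1 + 1 from rfl, contDiff_succ_iff_deriv] at hv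
    exact ⟨hv.1, hv.2.2.differentiable one_ne_zero⟩
  set w : ℝ → ℝ := fun t => u t - v t with hw_def
  have hw1 : Differentiable ℝ w := hu'.1.sub hv'.1
  have hdw : deriv w = fun t => deriv u t - deriv v t := by
    funext t
    exact deriv_sub (hu'.1 t) (hv'.1 t)
  have hwd' : Differentiable ℝ (deriv w) := by
    rw [hdw]; exact hu'.2.sub hv'.2
  have hw'' : ∀ t, deriv (deriv w) t = a t * (u t ^ 3 - v t ^ 3) := by
    intro t
    rw [hdw, deriv_fun_sub (hu'.2 t) (hv'.2 t)]
    have h1 := hueq t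
    have h2 := hveq t
    linear_combination h1 - h2
  -- the squared function
  set φ : ℝ → ℝ := fun t => w t ^ 2 with hφ_def
  have hdφt : ∀ t, HasDerivAt φ (2 * w t * deriv w t) t := by
    intro t
    have := ((hw1 t).hasDerivAt).fun_pow 2
    simpa using this
  have hdφ : deriv φ = fun t => 2 * w t * deriv w t := by
    funext t; exact (hdφt t).deriv
  have hφdiff : Differentiable ℝ φ := fun t => (hdφt t).differentiableAt
  have hdφdiff : Differentiable ℝ (deriv φ) := by
    rw [hdφ]
    exact ((hw1.const_mul 2).mul hwd')
  have hd2φ : ∀ t, deriv (deriv φ) t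
      = 2 * deriv w t * deriv w t + 2 * w t * deriv (deriv w) t := by
    intro t
    rw [hdφ]
    have h1 : HasDerivAt (fun s => 2 * w s) (2 * deriv w t) t :=
      ((hw1 t).hasDerivAt).const_mul 2
    have h2 : HasDerivAt (fun s => 2 * w s * deriv w s)
        (2 * deriv w t * deriv w t + 2 * w t * deriv (deriv w) t) t := by
      exact h1.mul ((hwd' t).hasDerivAt)
    exact h2.deriv
  -- cube difference sign lemma
  have hcube : ∀ t, 0 ≤ (u t - v t) * (u t ^ 3 - v t ^ 3) := by
    intro t
    nlinarith [sq_nonneg (u t - v t), sq_nonneg (u t + v t), sq_nonneg (u t), sq_nonneg (v t)]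
  -- second derivative of φ is nonnegative
  have hd2φ_nonneg : ∀ t, 0 ≤ deriv (deriv φ) t := by
    intro t
    rw [hd2φ t, hw'' t]
    have h1 := (ha t).1
    have h2 := hcube t
    have h3 : (0:ℝ) ≤ a t := le_trans (le_of_lt ha₀) h1
    have h4 : 0 ≤ a t * ((u t - v t) * (u t ^ 3 - v t ^ 3)) := mul_nonneg h3 h2
    have h5 : 0 ≤ 2 * deriv w t * deriv w t := by nlinarith [sq_nonneg (deriv w t)]
    have : w t * (a t * (u t ^ 3 - v t ^ 3)) = a t * ((u t - v t) * (u t ^ 3 - v t ^ 3)) := by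
      simp only [hw_def]; ring
    nlinarith
  have hmono : Monotone (deriv φ) := monotone_of_deriv_nonneg hdφdiff hd2φ_nonneg
  -- φ is bounded
  have hφbdd : ∀ t, |φ t| ≤ (Ku + Kv) ^ 2 := by
    intro t
    have h1 : |w t| ≤ Ku + Kv := by
      calc |w t| = |u t - v t| := rfl
        _ ≤ |u t| + |v t| := abs_sub _ _
        _ ≤ Ku + Kv := add_le_add (hKub t) (hKvb t)
    have h2 : φ t = w t ^ 2 := rfl
    rw [h2, abs_of_nonneg (sq_nonneg _)]
    calc w t ^ 2 = |w t| ^ 2 := (sq_abs _).symm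
      _ ≤ (Ku + Kv) ^ 2 := by
          apply pow_le_pow_left₀ (abs_nonneg _) h1
  -- hence deriv φ = 0 everywhere
  have hφ' : ∀ t, deriv φ t = 0 := aux_deriv_zero φ hφdiff hmono _ hφbdd
  -- so w t * deriv w t = 0 for all t
  have hww' : ∀ t, w t * deriv w t = 0 := by
    intro t
    have h := hφ' t
    rw [hdφ] at h
    simp only at h
    linarith
  -- and φ is constant
  have hφconst : ∀ s t : ℝ, φ s = φ t := fun s t =>
    is_const_of_deriv_eq_zero hφdiff hφ' s t
  -- conclude w = 0
  have hwzero : ∀ t, w t = 0 := by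
    intro t
    by_contra hwt
    have hall : ∀ s, w s ≠ 0 := by
      intro s hs
      have h1 : w s ^ 2 = w t ^ 2 := hφconst s t
      rw [hs] at h1
      have h3 : w t ^ 2 = 0 := by simpa using h1.symm
      exact hwt (pow_eq_zero_iff two_ne_zero |>.mp h3)
    have hderiv0 : deriv w = fun _ => (0:ℝ) := by
      funext s
      have := hww' s
      rcases mul_eq_zero.mp this with h | h
      · exact absurd h (hall s)
      · exact h
    have hw''0 : deriv (deriv w) t = 0 := by
      rw [hderiv0]; simp
    have heq := hw'' t
    rw [hw''0] at heq
    have hat : 0 < a t := lt_of_lt_of_le ha₀ (ha t).1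
    have hcube0 : u t ^ 3 - v t ^ 3 = 0 := by
      rcases mul_eq_zero.mp heq.symm with h | h
      · exact absurd h (ne_of_gt hat)
      · exact h
    have hwt' : u t - v t ≠ 0 := hwt
    rcases lt_or_gt_of_ne (sub_ne_zero.mp hwt') with h | h
    · have h5 : 0 < v t - u t := by linarith
      nlinarith [hcube0, mul_pos h5 (mul_pos h5 h5),
        mul_nonneg h5.le (sq_nonneg (v t + u t))]
    · have h5 : 0 < u t - v t := by linarith
      nlinarith [hcube0, mul_pos h5 (mul_pos h5 h5),
        mul_nonneg h5.le (sq_nonneg (u t + v t))]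
  funext t
  have := hwzero t
  simp only [hw_def] at this
  linarith
end

section
/- Let L > 0, let a, f : ℝ → ℝ be continuous, and suppose there exist constants M > 0 and a₀ > 0 such that |f(t)| ≤ M and a(t) ≥ a₀ for all t. If u : [−L, L] → ℝ is twice continuously differentiable, satisfies u''(t) − a(t)·u(t)³ = f(t) for all t ∈ (−L, L), and u(−L) = u(L) = 0, then |u(t)| ≤ (M/a₀)^{1/3} for all t ∈ [−L, L]; in particular this bound is independent of L. -/
open Filter Set

lemma secondDeriv_nonpos_of_isLocalMax {g : ℝ → ℝ} {c : ℝ}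
    (hdiff : ∀ᶠ t in nhds c, DifferentiableAt ℝ g t)
    (hd : DifferentiableAt ℝ (deriv g) c)
    (hmax : IsLocalMax g c) : deriv (deriv g) c ≤ 0 := by
  by_contra hpos
  push_neg at hpos
  have h0 : deriv g c = 0 := hmax.deriv_eq_zero
  have hslope : Tendsto (slope (deriv g) c) (nhdsWithin c {c}ᶜ)
      (nhds (deriv (deriv g) c)) := hasDerivAt_iff_tendsto_slope.1 hd.hasDerivAt
  have h1 : ∀ᶠ t in nhdsWithin c (Ioi c), 0 < slope (deriv g) c t :=
    (hslope.eventually (eventually_gt_nhds hpos)).filter_mono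
      (nhdsWithin_mono c (fun x hx => ne_of_gt hx))
  have h2 : ∀ᶠ t in nhdsWithin c (Ioi c), 0 < deriv g t := by
    filter_upwards [h1, self_mem_nhdsWithin] with t hs ht
    have htc : 0 < t - c := sub_pos.2 ht
    rw [slope_def_field] at hs
    have hnum := mul_pos hs htc
    rw [div_mul_cancel₀ _ (ne_of_gt htc)] at hnum
    simpa [h0] using hnum
  have h3 : ∀ᶠ t in nhdsWithin c (Ioi c), g t ≤ g c := hmax.filter_mono nhdsWithin_le_nhds
  have h4 : ∀ᶠ t in nhdsWithin c (Ioi c), DifferentiableAt ℝ g t :=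
    hdiff.filter_mono nhdsWithin_le_nhds
  obtain ⟨b, hb, hS⟩ := mem_nhdsGT_iff_exists_Ioo_subset.1
    ((h2.and (h3.and h4)) : {t | 0 < deriv g t ∧ g t ≤ g c ∧ DifferentiableAt ℝ g t}
      ∈ nhdsWithin c (Ioi c))
  set t₁ : ℝ := (c + b) / 2 with ht₁
  have hct₁ : c < t₁ := by simp only [ht₁]; simp at hb ⊢; linarith
  have ht₁b : t₁ < b := by simp only [ht₁]; simp at hb ⊢; linarith
  have hcont : ContinuousOn g (Icc c t₁) := by
    intro t ht
    rcases eq_or_lt_of_le ht.1 with h | h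
    · exact (h ▸ hdiff.self_of_nhds).continuousAt.continuousWithinAt
    · exact ((hS ⟨h, lt_of_le_of_lt ht.2 ht₁b⟩).2.2).continuousAt.continuousWithinAt
  have hder : ∀ x ∈ Ioo c t₁, HasDerivAt g (deriv g x) x := fun x hx =>
    ((hS ⟨hx.1, hx.2.trans ht₁b⟩).2.2).hasDerivAt
  obtain ⟨x, hx, hxeq⟩ := exists_hasDerivAt_eq_slope g (deriv g) hct₁ hcont hder
  have hxS := hS ⟨hx.1, hx.2.trans ht₁b⟩
  have ht₁S := hS ⟨hct₁, ht₁b⟩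
  have : (g t₁ - g c) / (t₁ - c) ≤ 0 :=
    div_nonpos_of_nonpos_of_nonneg (by linarith [ht₁S.2.1]) (by linarith)
  linarith [hxS.1, hxeq ▸ this]

lemma secondDeriv_nonneg_of_isLocalMin {g : ℝ → ℝ} {c : ℝ}
    (hdiff : ∀ᶠ t in nhds c, DifferentiableAt ℝ g t)
    (hd : DifferentiableAt ℝ (deriv g) c)
    (hmin : IsLocalMin g c) : 0 ≤ deriv (deriv g) c := by
  have hneg : deriv (fun t => -g t) = fun t => -deriv g t := by
    funext t; exact deriv.neg
  have hdiff' : ∀ᶠ t in nhds c, DifferentiableAt ℝ (fun t => -g t) t :=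
    hdiff.mono fun t ht => ht.neg
  have hd' : DifferentiableAt ℝ (deriv (fun t => -g t)) c := by
    rw [hneg]; exact hd.neg
  have h := secondDeriv_nonpos_of_isLocalMax hdiff' hd' hmin.neg
  rw [hneg] at h
  have : deriv (fun t => -deriv g t) c = -deriv (deriv g) c := deriv.neg
  rw [this] at h
  linarith

/-- Uniform (in `L`) a priori bound for solutions of the Dirichlet
problem `u'' - a(t) u³ = f(t)` on `(-L, L)`, `u(-L) = u(L) = 0`:
`|u(t)| ≤ (M/a₀)^(1/3)` on `[-L, L]`. -/
theorem stmt2 (L : ℝ) (hL : 0 < L) (a f : ℝ → ℝ)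
    (ha_cont : Continuous a) (hf_cont : Continuous f)
    (M a₀ : ℝ) (hM : 0 < M) (ha₀ : 0 < a₀)
    (hf : ∀ t : ℝ, |f t| ≤ M) (ha : ∀ t : ℝ, a₀ ≤ a t)
    (u : ℝ → ℝ) (hu : ContDiffOn ℝ 2 u (Set.Icc (-L) L))
    (heq : ∀ t ∈ Set.Ioo (-L) L, deriv (deriv u) t - a t * u t ^ 3 = f t)
    (hbc₁ : u (-L) = 0) (hbc₂ : u L = 0) :
    ∀ t ∈ Set.Icc (-L) L, |u t| ≤ (M / a₀) ^ ((1 : ℝ) / 3) := by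
  set B : ℝ := (M / a₀) ^ ((1 : ℝ) / 3) with hBdef
  have hMa : 0 < M / a₀ := div_pos hM ha₀
  have hB : 0 < B := Real.rpow_pos_of_pos hMa _
  have hB3 : B ^ 3 = M / a₀ := by
    rw [hBdef, ← Real.rpow_natCast ((M / a₀) ^ ((1:ℝ)/3)) 3,
      ← Real.rpow_mul hMa.le]
    norm_num
  have huIoo : ContDiffOn ℝ 2 u (Ioo (-L) L) := hu.mono Ioo_subset_Icc_self
  have hu' : ContDiffOn ℝ 1 (deriv u) (Ioo (-L) L) := by
    have := huIoo.deriv_of_isOpen (m := 1) isOpen_Ioo (by norm_num)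
    simpa using this
  -- differentiability facts at an interior point
  have hev : ∀ t₀ ∈ Ioo (-L) L, ∀ᶠ t in nhds t₀, DifferentiableAt ℝ u t := by
    intro t₀ ht₀
    filter_upwards [isOpen_Ioo.mem_nhds ht₀] with t ht
    exact (huIoo.differentiableOn (by norm_num)).differentiableAt (isOpen_Ioo.mem_nhds ht)
  have hd' : ∀ t₀ ∈ Ioo (-L) L, DifferentiableAt ℝ (deriv u) t₀ := fun t₀ ht₀ =>
    (hu'.differentiableOn (by norm_num)).differentiableAt (isOpen_Ioo.mem_nhds ht₀)
  have hne : (Icc (-L) L).Nonempty := nonempty_Icc.2 (by linarith)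
  obtain ⟨c, hcmem, hcmax⟩ := isCompact_Icc.exists_isMaxOn hne hu.continuousOn
  obtain ⟨d, hdmem, hdmin⟩ := isCompact_Icc.exists_isMinOn hne hu.continuousOn
  -- upper bound at the max point
  have hmaxB : u c ≤ B := by
    rcases eq_or_lt_of_le hcmem.1 with h1 | h1
    · rw [← h1, hbc₁]; exact hB.le
    rcases eq_or_lt_of_le hcmem.2 with h2 | h2
    · rw [h2, hbc₂]; exact hB.le
    have hcIoo : c ∈ Ioo (-L) L := ⟨h1, h2⟩
    have hlocal : IsLocalMax u c := hcmax.isLocalMax (Icc_mem_nhds h1 h2)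
    have h'' := secondDeriv_nonpos_of_isLocalMax (hev c hcIoo) (hd' c hcIoo) hlocal
    have he := heq c hcIoo
    have hfc := abs_le.1 (hf c)
    have hkey : a c * u c ^ 3 ≤ M := by linarith
    rcases le_or_gt (u c) 0 with h | h
    · linarith
    · have hmul : a₀ * u c ^ 3 ≤ a c * u c ^ 3 :=
        mul_le_mul_of_nonneg_right (ha c) (by positivity)
      have h3 : u c ^ 3 ≤ B ^ 3 := by
        rw [hB3, le_div_iff₀ ha₀]; nlinarith
      exact le_of_pow_le_pow_left₀ (by norm_num) hB.le h3
  -- lower bound at the min point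
  have hminB : -B ≤ u d := by
    rcases eq_or_lt_of_le hdmem.1 with h1 | h1
    · rw [← h1, hbc₁]; linarith
    rcases eq_or_lt_of_le hdmem.2 with h2 | h2
    · rw [h2, hbc₂]; linarith
    have hdIoo : d ∈ Ioo (-L) L := ⟨h1, h2⟩
    have hlocal : IsLocalMin u d := hdmin.isLocalMin (Icc_mem_nhds h1 h2)
    have h'' := secondDeriv_nonneg_of_isLocalMin (hev d hdIoo) (hd' d hdIoo) hlocal
    have he := heq d hdIoo
    have hfd := abs_le.1 (hf d)
    have hkey : -M ≤ a d * u d ^ 3 := by linarith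
    rcases le_or_gt 0 (u d) with h | h
    · linarith
    · have hcube : u d ^ 3 < 0 := Odd.pow_neg (by decide) h
      have hmul : a d * u d ^ 3 ≤ a₀ * u d ^ 3 :=
        mul_le_mul_of_nonpos_right (ha d) hcube.le
      have h3 : (-u d) ^ 3 ≤ B ^ 3 := by
        rw [hB3]
        have hneg : -(u d ^ 3) ≤ M / a₀ := by
          rw [le_div_iff₀ ha₀]; nlinarith
        calc (-u d) ^ 3 = -(u d ^ 3) := by ring
          _ ≤ M / a₀ := hneg
      have := le_of_pow_le_pow_left₀ (n := 3) (by norm_num) hB.le h3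
      linarith
  intro t ht
  exact abs_le.2 ⟨le_trans hminB (hdmin ht), le_trans (hcmax ht) hmaxB⟩
end

section
/- Let b : ℝ → ℝ be continuous with b(t) > 0 for all t ∈ ℝ. If w : ℝ → ℝ is twice continuously differentiable, satisfies w''(t) − b(t)·w(t) = 0 for all t ∈ ℝ, and is uniformly bounded (there exists C > 0 with |w(t)| ≤ C for all t), then w(t) = 0 for all t ∈ ℝ. -/
/-- A uniformly bounded `C²` solution of `w'' - b(t) w = 0` on `ℝ`
with continuous `b > 0` is identically zero. -/
theorem stmt4 (b : ℝ → ℝ) (hb_cont : Continuous b) (hb_pos : ∀ t : ℝ, 0 < b t)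
    (w : ℝ → ℝ) (hw : ContDiff ℝ 2 w)
    (heq : ∀ t : ℝ, deriv (deriv w) t - b t * w t = 0)
    (hbdd : ∃ C > (0 : ℝ), ∀ t : ℝ, |w t| ≤ C) :
    ∀ t : ℝ, w t = 0 := by
  obtain ⟨C, hC, hbound⟩ := hbdd
  have hw1 : Differentiable ℝ w := hw.differentiable (by norm_num)
  have hw2 : ContDiff ℝ 1 (deriv w) := by
    have h : ContDiff ℝ ((1 : ℕ) + 1 : ℕ∞) w := by exact_mod_cast hw
    exact ((contDiff_succ_iff_deriv.mp h).2.2 : ContDiff ℝ ((1:ℕ) : ℕ∞) (deriv w))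
  have hdw : Differentiable ℝ (deriv w) := hw2.differentiable (by norm_num)
  have heq' : ∀ t, deriv (deriv w) t = b t * w t := fun t => by
    have := heq t; linarith
  set φ : ℝ → ℝ := fun t => w t * deriv w t with hφdef
  have hφd : ∀ t, HasDerivAt φ ((deriv w t) ^ 2 + b t * (w t) ^ 2) t := by
    intro t
    have h1 := ((hw1 t).hasDerivAt).mul ((hdw t).hasDerivAt)
    rw [heq' t] at h1
    convert h1 using 1
    · rfl
    · rfl
    · rfl
    ring
  have hφmono : Monotone φ := by
    apply monotone_of_deriv_nonneg
    · exact fun t => ((hφd t).differentiableAt)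
    · intro t
      rw [(hφd t).deriv]
      have := (hb_pos t).le
      positivity
  set E : ℝ → ℝ := fun t => w t * w t with hEdef
  have hEd : ∀ t, HasDerivAt E (2 * φ t) t := by
    intro t
    have h1 := ((hw1 t).hasDerivAt).mul ((hw1 t).hasDerivAt)
    convert h1 using 1
    · rfl
    · rfl
    · rfl
    simp only [hφdef]
    ring
  have hEb : ∀ t, E t ≤ C ^ 2 := fun t => by
    have h := hbound t
    have h2 : |w t| ^ 2 ≤ C ^ 2 := by
      apply sq_le_sq' <;> nlinarith [abs_nonneg (w t)]
    simpa [sq_abs, sq] using h2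
  have hE0 : ∀ t, 0 ≤ E t := fun t => mul_self_nonneg _
  have hEdiff : Differentiable ℝ E := fun t => (hEd t).differentiableAt
  -- φ is identically zero
  have hφ0 : ∀ t, φ t = 0 := by
    intro t₁
    rcases lt_trichotomy (φ t₁) 0 with h | h | h
    · exfalso
      set c := -φ t₁ with hcdef
      have hc : 0 < c := by simp [hcdef]; linarith
      have hg : AntitoneOn (fun t => E t + 2 * c * t) (Set.Iic t₁) := by
        apply antitoneOn_of_deriv_nonpos (convex_Iic t₁)
        · exact (hEdiff.continuous.add (by continuity)).continuousOn
        · intro x hx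
          exact DifferentiableAt.differentiableWithinAt ((hEdiff x).add (((hasDerivAt_id x).const_mul (2 * c)).differentiableAt))
        · intro x hx
          rw [interior_Iic] at hx
          have hd : HasDerivAt (fun t => E t + 2 * c * t) (2 * φ x + 2 * c) x :=
            (hEd x).add ((hasDerivAt_id x).const_mul (2 * c) |>.congr_deriv (by ring))
          rw [hd.deriv]
          have := hφmono (le_of_lt hx)
          simp only [hcdef] at *
          linarith
      set t := t₁ - (C ^ 2 + 1) / (2 * c) with htdef
      have ht : t ≤ t₁ := by
        have h0 : 0 < (C ^ 2 + 1) / (2 * c) := by positivity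
        rw [htdef]; linarith
      have key : E t₁ + 2 * c * t₁ ≤ E t + 2 * c * t :=
        hg (Set.mem_Iic.mpr ht) (Set.mem_Iic.mpr le_rfl) ht
      -- E t₁ + 2c t₁ ≤ E t + 2c t
      have hts : 2 * c * (t₁ - t) = C ^ 2 + 1 := by
        rw [htdef]; field_simp; try ring
      have h1 := hEb t
      have h2 := hE0 t₁
      nlinarith [key, hts]
    · exact h
    · exfalso
      set c := φ t₁ with hcdef
      have hc : 0 < c := h
      have hg : MonotoneOn (fun t => E t - 2 * c * t) (Set.Ici t₁) := by
        apply monotoneOn_of_deriv_nonneg (convex_Ici t₁)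
        · exact (hEdiff.continuous.sub (by continuity)).continuousOn
        · intro x hx
          exact DifferentiableAt.differentiableWithinAt ((hEdiff x).sub (((hasDerivAt_id x).const_mul (2 * c)).differentiableAt))
        · intro x hx
          rw [interior_Ici] at hx
          have hd : HasDerivAt (fun t => E t - 2 * c * t) (2 * φ x - 2 * c) x :=
            (hEd x).sub ((hasDerivAt_id x).const_mul (2 * c) |>.congr_deriv (by ring))
          rw [hd.deriv]
          have := hφmono (le_of_lt hx)
          simp only [hcdef] at *
          linarith
      set t := t₁ + (C ^ 2 + 1) / (2 * c) with htdef
      have ht : t₁ ≤ t := by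
        have h0 : 0 < (C ^ 2 + 1) / (2 * c) := by positivity
        rw [htdef]; linarith
      have key : E t₁ - 2 * c * t₁ ≤ E t - 2 * c * t :=
        hg (Set.mem_Ici.mpr le_rfl) (Set.mem_Ici.mpr ht) ht
      have hts : 2 * c * (t - t₁) = C ^ 2 + 1 := by
        rw [htdef]; field_simp; try ring
      have h1 := hEb t
      have h2 := hE0 t₁
      nlinarith [key, hts]
  -- E is constant
  have hEconst : ∀ s t : ℝ, E s = E t := by
    intro s t
    apply is_const_of_deriv_eq_zero hEdiff
    intro x
    rw [(hEd x).deriv, hφ0 x]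
    ring
  intro t
  by_contra hwt
  have hEt : 0 < E t := mul_self_pos.mpr hwt
  have hne : ∀ s, w s ≠ 0 := by
    intro s hs
    apply hwt
    have h0 : w t * w t = 0 := by
      have h1 : E s = E t := hEconst s t
      simp only [hEdef] at h1
      rw [← h1, hs, mul_zero]
    exact mul_self_eq_zero.mp h0
  have hdw0 : ∀ s, deriv w s = 0 := by
    intro s
    have := hφ0 s
    simp only [hφdef] at this
    rcases mul_eq_zero.mp this with h | h
    · exact absurd h (hne s)
    · exact h
  have hdd : deriv (deriv w) t = 0 := by
    have hz : deriv w = fun _ => (0 : ℝ) := funext hdw0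
    rw [hz]
    simp
  have := heq' t
  rw [hdd] at this
  have hb := hb_pos t
  have : w t = 0 := by
    have := this.symm
    rcases mul_eq_zero.mp this with h | h
    · linarith
    · exact h
  exact hwt this
end

section
/- The function u(t) = t·sin t is a solution on ℝ of the equation u'' − u³ = 2 cos t − t sin t − t³ sin³ t, and moreover every twice continuously differentiable function ũ : ℝ → ℝ satisfying ũ''(t) − ũ(t)³ = 2 cos t − t sin t − t³ sin³ t for all t ∈ ℝ is unbounded, i.e., there is no constant C > 0 with |ũ(t)| ≤ C for all t ∈ ℝ. -/
open Real Set

/-- If the second derivative of a `C²` function is `≤ -M` on `[a, a+2h]`, then at the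
midpoint the function exceeds the average of the endpoint values by `M h²/2`. -/
lemma midpoint_bump (v : ℝ → ℝ) (hv : ContDiff ℝ 2 v) (a h M : ℝ) (hh : 0 ≤ h)
    (hM : ∀ t ∈ Set.Icc a (a + 2 * h), deriv (deriv v) t ≤ -M) :
    (v a + v (a + 2 * h)) / 2 + M * h ^ 2 / 2 ≤ v (a + h) := by
  have hv1 : Differentiable ℝ v := hv.differentiable (by norm_num)
  have hv2 : ContDiff ℝ 1 (deriv v) := by
    have h2 : ContDiff ℝ ((1 : ℕ) + 1) v := by exact_mod_cast hv
    exact (contDiff_succ_iff_deriv.mp h2).2.2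
  have hdv : Differentiable ℝ (deriv v) := hv2.differentiable (by norm_num)
  set q : ℝ → ℝ := fun t => M / 2 * ((t - a) * (t - (a + 2 * h))) with hq_def
  set q' : ℝ → ℝ := fun t => M * (t - (a + h)) with hq'_def
  have hq1 : ∀ t, HasDerivAt q (q' t) t := by
    intro t
    have := (((hasDerivAt_id t).sub_const a).fun_mul
      ((hasDerivAt_id t).sub_const (a + 2 * h))).const_mul (M / 2)
    exact this.congr_deriv (by simp [hq'_def]; ring)
  have hq2 : ∀ t, HasDerivAt q' M t := by
    intro t
    simpa using ((hasDerivAt_id t).sub_const (a + h)).const_mul M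
  set φ : ℝ → ℝ := fun t => v t + q t with hφ_def
  have hφ1 : ∀ t, HasDerivAt φ (deriv v t + q' t) t := fun t =>
    ((hv1 t).hasDerivAt).add (hq1 t)
  have hφd : deriv φ = fun t => deriv v t + q' t := funext fun t => (hφ1 t).deriv
  have hφ2 : ∀ t, deriv (deriv φ) t = deriv (deriv v) t + M := by
    intro t
    rw [hφd]
    exact (((hdv t).hasDerivAt).add (hq2 t)).deriv
  have hφdiff : Differentiable ℝ φ := fun t => (hφ1 t).differentiableAt
  have hφddiff : Differentiable ℝ (deriv φ) := by
    rw [hφd]; exact fun t => (((hdv t).hasDerivAt).add (hq2 t)).differentiableAt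
  have hconc : ConcaveOn ℝ (Set.Icc a (a + 2 * h)) φ := by
    apply concaveOn_of_deriv2_nonpos' (convex_Icc _ _) hφdiff.differentiableOn
      hφddiff.differentiableOn
    intro x hx
    have : deriv^[2] φ x = deriv (deriv φ) x := by
      simp [Function.iterate_succ, Function.iterate_one]
    rw [this, hφ2 x]
    linarith [hM x hx]
  have hab : a ≤ a + 2 * h := by linarith
  have key := hconc.2 (Set.left_mem_Icc.mpr hab) (Set.right_mem_Icc.mpr hab)
    (by norm_num : (0:ℝ) ≤ 1/2) (by norm_num : (0:ℝ) ≤ 1/2) (by norm_num)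
  have hmid : (1/2 : ℝ) • a + (1/2 : ℝ) • (a + 2 * h) = a + h := by
    simp [smul_eq_mul]; ring
  rw [hmid] at key
  simp only [smul_eq_mul, hφ_def, hq_def] at key
  nlinarith [key]

/-- `u(t) = t sin t` solves `u'' - u³ = 2 cos t - t sin t - t³ sin³ t`
on `ℝ`, and every `C²` solution of this equation on `ℝ` is unbounded. -/
theorem stmt6 :
    (∀ t : ℝ, deriv (deriv (fun s : ℝ => s * Real.sin s)) t - (t * Real.sin t) ^ 3 =
      2 * Real.cos t - t * Real.sin t - t ^ 3 * Real.sin t ^ 3) ∧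
    (∀ v : ℝ → ℝ, ContDiff ℝ 2 v →
      (∀ t : ℝ, deriv (deriv v) t - v t ^ 3 =
        2 * Real.cos t - t * Real.sin t - t ^ 3 * Real.sin t ^ 3) →
      ¬ ∃ C > (0 : ℝ), ∀ t : ℝ, |v t| ≤ C) := by
  constructor
  · -- first part: derivative computation
    intro t
    have h1 : ∀ s : ℝ, HasDerivAt (fun x : ℝ => x * Real.sin x)
        (Real.sin s + s * Real.cos s) s := by
      intro s
      simpa using (hasDerivAt_id s).fun_mul (Real.hasDerivAt_sin s)
    have hd1 : deriv (fun s : ℝ => s * Real.sin s) = fun s => Real.sin s + s * Real.cos s :=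
      funext fun s => (h1 s).deriv
    have h2 : HasDerivAt (fun s : ℝ => Real.sin s + s * Real.cos s)
        (2 * Real.cos t - t * Real.sin t) t := by
      have h := (Real.hasDerivAt_sin t).fun_add ((hasDerivAt_id t).fun_mul (Real.hasDerivAt_cos t))
      simp only [id] at h
      exact h.congr_deriv (by ring)
    rw [hd1, h2.deriv]
    ring
  · -- second part: unboundedness
    rintro v hv heq ⟨C, hC, hbound⟩
    -- second derivative formula
    have hdd : ∀ t : ℝ, deriv (deriv v) t =
        v t ^ 3 + 2 * Real.cos t - t * Real.sin t - t ^ 3 * Real.sin t ^ 3 := by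
      intro t; have := heq t; linarith
    set T : ℝ := 2 * (C ^ 3 + 16 * C + 3) with hT_def
    obtain ⟨n, hn⟩ := exists_nat_ge T
    set m : ℝ := π / 2 + 2 * π * n with hm_def
    have hpi : (3.14 : ℝ) < π := by
      have := Real.pi_gt_d6; linarith
    set a : ℝ := m - 1/2 with ha_def
    have hmT : T ≤ a := by
      have h1 : (n : ℝ) ≤ 2 * π * n := by nlinarith [Nat.cast_nonneg (α := ℝ) n]
      rw [ha_def, hm_def]
      linarith
    have hT0 : 0 < T := by nlinarith [pow_pos hC 3]
    -- sin lower bound on the interval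
    have hsin : ∀ t ∈ Set.Icc a (a + 2 * (1/2 : ℝ)), (1/2 : ℝ) ≤ Real.sin t := by
      intro t ht
      have hδ : |t - m| ≤ 1/2 := by
        rw [abs_le]; constructor <;> [skip; skip] <;>
          · simp only [ha_def] at ht; cases ht with
            | intro h1 h2 => linarith
      have hst : Real.sin t = Real.cos (t - m) := by
        have h := Real.sin_add_nat_mul_two_pi (π/2 + (t - m)) n
        rw [show π/2 + (t - m) + (n : ℝ) * (2 * π) = t from by rw [hm_def]; ring] at h
        rw [h, Real.sin_add, Real.sin_pi_div_two, Real.cos_pi_div_two]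
        ring
      rw [hst]
      have h1 : (t - m) ^ 2 ≤ (1/2)^2 := by
        have := sq_le_sq' (neg_le_of_abs_le hδ) (le_of_abs_le hδ)
        simpa using this
      have := Real.one_sub_sq_div_two_le_cos (x := t - m)
      nlinarith
    -- second derivative bound on the interval
    have hM : ∀ t ∈ Set.Icc a (a + 2 * (1/2 : ℝ)), deriv (deriv v) t ≤ -(16 * C + 1) := by
      intro t ht
      have hs := hsin t ht
      have htT : T ≤ t := le_trans hmT ht.1
      have ht0 : 0 < t := lt_of_lt_of_le hT0 htT
      have hv3 : v t ^ 3 ≤ C ^ 3 := by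
        calc v t ^ 3 ≤ |v t ^ 3| := le_abs_self _
          _ = |v t| ^ 3 := by rw [abs_pow]
          _ ≤ C ^ 3 := pow_le_pow_left₀ (abs_nonneg _) (hbound t) 3
      have hts : T / 2 ≤ t * Real.sin t := by nlinarith
      have hts3 : (T/2) ^ 3 ≤ t ^ 3 * Real.sin t ^ 3 := by
        have : (t * Real.sin t) ^ 3 = t ^ 3 * Real.sin t ^ 3 := by ring
        rw [← this]
        exact pow_le_pow_left₀ (by positivity) hts 3
      have hcube : C ^ 3 + 16 * C + 3 ≤ (T/2) ^ 3 := by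
        have hT2 : T / 2 = C ^ 3 + 16 * C + 3 := by rw [hT_def]; ring
        rw [hT2]
        have h3 : (3:ℝ) ≤ C ^ 3 + 16 * C + 3 := by nlinarith [pow_pos hC 3]
        nlinarith [mul_nonneg (mul_nonneg
          (by linarith : (0:ℝ) ≤ C ^ 3 + 16 * C + 3 - 1)
          (by linarith : (0:ℝ) ≤ C ^ 3 + 16 * C + 3))
          (by linarith : (0:ℝ) ≤ C ^ 3 + 16 * C + 3 + 1)]
      rw [hdd t]
      have hcos := Real.cos_le_one t
      have hts0 : 0 ≤ t * Real.sin t := by nlinarith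
      linarith
    -- apply midpoint lemma
    have key := midpoint_bump v hv a (1/2) (16 * C + 1) (by norm_num) hM
    have hma : a + 1/2 = m := by rw [ha_def]; ring
    rw [hma] at key
    have h1 := hbound m
    have h2 := hbound a
    have h3 := hbound (a + 2 * (1/2 : ℝ))
    rw [abs_le] at h1 h2 h3
    nlinarith [key, h1.2, h2.1, h3.1]
end

section
/- Let L > 0 and let a, f : [−L, L] → ℝ be continuous with a(t) > 0 for all t ∈ [−L, L]. Then there exists a twice continuously differentiable function u : [−L, L] → ℝ satisfying u''(t) − a(t)·u(t)³ = f(t) for all t ∈ (−L, L) and u(−L) = u(L) = 0. -/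
open Real intervalIntegral

noncomputable def solW (L b : ℝ) (h : ℝ → ℝ) (t : ℝ) : ℝ :=
  (Real.sinh (b*(L-t)) * (∫ s in (-L)..t, Real.sinh (b*(L+s)) * h s)
   + Real.sinh (b*(L+t)) * (∫ s in t..L, Real.sinh (b*(L-s)) * h s)) / (b * Real.sinh (2*(b*L)))

noncomputable def solG (L b : ℝ) (h : ℝ → ℝ) (t : ℝ) : ℝ :=
  (b * (Real.cosh (b*(L+t)) * (∫ s in t..L, Real.sinh (b*(L-s)) * h s)
   - Real.cosh (b*(L-t)) * (∫ s in (-L)..t, Real.sinh (b*(L+s)) * h s))) / (b * Real.sinh (2*(b*L)))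

lemma contlinp (L b : ℝ) : Continuous (fun s : ℝ => b*(L+s)) :=
  continuous_const.mul (continuous_const.add continuous_id)

lemma contlinm (L b : ℝ) : Continuous (fun s : ℝ => b*(L-s)) :=
  continuous_const.mul (continuous_const.sub continuous_id)

lemma contkp (L b : ℝ) {h : ℝ → ℝ} (hh : Continuous h) :
    Continuous (fun s => Real.sinh (b*(L+s)) * h s) :=
  (Real.continuous_sinh.comp (contlinp L b)).mul hh

lemma contkm (L b : ℝ) {h : ℝ → ℝ} (hh : Continuous h) :
    Continuous (fun s => Real.sinh (b*(L-s)) * h s) :=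
  (Real.continuous_sinh.comp (contlinm L b)).mul hh

lemma hasDerivAt_P (L b : ℝ) {h : ℝ → ℝ} (hh : Continuous h) (t : ℝ) :
    HasDerivAt (fun t => ∫ s in (-L)..t, Real.sinh (b*(L+s)) * h s)
      (Real.sinh (b*(L+t)) * h t) t :=
  intervalIntegral.integral_hasDerivAt_right ((contkp L b hh).intervalIntegrable _ _)
    ((contkp L b hh).stronglyMeasurableAtFilter _ _) (contkp L b hh).continuousAt

lemma hasDerivAt_Q (L b : ℝ) {h : ℝ → ℝ} (hh : Continuous h) (t : ℝ) :
    HasDerivAt (fun t => ∫ s in t..L, Real.sinh (b*(L-s)) * h s)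
      (-(Real.sinh (b*(L-t)) * h t)) t :=
  intervalIntegral.integral_hasDerivAt_left ((contkm L b hh).intervalIntegrable _ _)
    ((contkm L b hh).stronglyMeasurableAtFilter _ _) (contkm L b hh).continuousAt

lemma hasDerivAt_S1 (L b t : ℝ) :
    HasDerivAt (fun t => Real.sinh (b*(L-t))) (-(b * Real.cosh (b*(L-t)))) t := by
  have h1 : HasDerivAt (fun t : ℝ => b*(L-t)) (-b) t := by
    simpa using ((hasDerivAt_id t).const_sub L).const_mul b
  simpa [mul_comm] using h1.sinh

lemma hasDerivAt_S2 (L b t : ℝ) :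
    HasDerivAt (fun t => Real.sinh (b*(L+t))) (b * Real.cosh (b*(L+t))) t := by
  have h1 : HasDerivAt (fun t : ℝ => b*(L+t)) b t := by
    simpa using ((hasDerivAt_id t).const_add L).const_mul b
  simpa [mul_comm] using h1.sinh

lemma hasDerivAt_C1 (L b t : ℝ) :
    HasDerivAt (fun t => Real.cosh (b*(L-t))) (-(b * Real.sinh (b*(L-t)))) t := by
  have h1 : HasDerivAt (fun t : ℝ => b*(L-t)) (-b) t := by
    simpa using ((hasDerivAt_id t).const_sub L).const_mul b
  simpa [mul_comm] using h1.cosh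

lemma hasDerivAt_C2 (L b t : ℝ) :
    HasDerivAt (fun t => Real.cosh (b*(L+t))) (b * Real.sinh (b*(L+t))) t := by
  have h1 : HasDerivAt (fun t : ℝ => b*(L+t)) b t := by
    simpa using ((hasDerivAt_id t).const_add L).const_mul b
  simpa [mul_comm] using h1.cosh

lemma hasDerivAt_solW (L b : ℝ) {h : ℝ → ℝ} (hh : Continuous h) (t : ℝ) :
    HasDerivAt (solW L b h) (solG L b h t) t := by
  have hP := hasDerivAt_P L b hh t
  have hQ := hasDerivAt_Q L b hh t
  have h1 := ((hasDerivAt_S1 L b t).mul hP).add ((hasDerivAt_S2 L b t).mul hQ)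
  have h2 := h1.div_const (b * Real.sinh (2*(b*L)))
  refine h2.congr_deriv ?_
  symm
  unfold solG
  ring

lemma hasDerivAt_solG (L b : ℝ) {h : ℝ → ℝ} (hh : Continuous h) (hb : 0 < b) (hL : 0 < L) (t : ℝ) :
    HasDerivAt (solG L b h) (b^2 * solW L b h t - h t) t := by
  have hP := hasDerivAt_P L b hh t
  have hQ := hasDerivAt_Q L b hh t
  have h1 := (((hasDerivAt_C2 L b t).mul hQ).sub ((hasDerivAt_C1 L b t).mul hP)).const_mul b
  have h2 := h1.div_const (b * Real.sinh (2*(b*L)))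
  refine h2.congr_deriv ?_
  symm
  unfold solW
  have hs : Real.sinh (2*(b*L)) = Real.sinh (b*(L-t)) * Real.cosh (b*(L+t))
      + Real.cosh (b*(L-t)) * Real.sinh (b*(L+t)) := by
    rw [show 2*(b*L) = b*(L-t) + b*(L+t) by ring, Real.sinh_add]
  have hD : b * Real.sinh (2*(b*L)) ≠ 0 := by
    have : 0 < Real.sinh (2*(b*L)) := by
      rw [Real.sinh_pos_iff]; positivity
    positivity
  rw [eq_div_iff hD]
  field_simp
  rw [show b*L*2 = 2*(b*L) by ring, hs]
  ring

lemma solW_left (L b : ℝ) (h : ℝ → ℝ) : solW L b h (-L) = 0 := by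
  unfold solW
  simp [intervalIntegral.integral_same]

lemma solW_right (L b : ℝ) (h : ℝ → ℝ) : solW L b h L = 0 := by
  unfold solW
  simp [intervalIntegral.integral_same]

lemma solW_sub (L b : ℝ) {h₁ h₂ : ℝ → ℝ} (h1 : Continuous h₁) (h2 : Continuous h₂) (t : ℝ) :
    solW L b h₁ t - solW L b h₂ t = solW L b (fun s => h₁ s - h₂ s) t := by
  unfold solW
  have e1 : (∫ s in (-L)..t, Real.sinh (b*(L+s)) * (h₁ s - h₂ s))
      = (∫ s in (-L)..t, Real.sinh (b*(L+s)) * h₁ s) - ∫ s in (-L)..t, Real.sinh (b*(L+s)) * h₂ s := by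
    rw [← intervalIntegral.integral_sub ((contkp L b h1).intervalIntegrable _ _)
      ((contkp L b h2).intervalIntegrable _ _)]
    congr 1; ext s; ring
  have e2 : (∫ s in t..L, Real.sinh (b*(L-s)) * (h₁ s - h₂ s))
      = (∫ s in t..L, Real.sinh (b*(L-s)) * h₁ s) - ∫ s in t..L, Real.sinh (b*(L-s)) * h₂ s := by
    rw [← intervalIntegral.integral_sub ((contkm L b h1).intervalIntegrable _ _)
      ((contkm L b h2).intervalIntegrable _ _)]
    congr 1; ext s; ring
  rw [e1, e2]
  ring

set_option maxHeartbeats 1000000 in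
lemma abs_solW_le (L b : ℝ) (hL : 0 < L) (hb : 0 < b) {h : ℝ → ℝ} (hh : Continuous h)
    {C : ℝ} (hC0 : 0 ≤ C) (hC : ∀ s ∈ Set.Icc (-L) L, |h s| ≤ C)
    {t : ℝ} (ht : t ∈ Set.Icc (-L) L) :
    |solW L b h t| ≤ (1 - 1/Real.cosh (b*L)) * C / b^2 := by
  obtain ⟨htl, htr⟩ := ht
  have hb2 : (0:ℝ) < b^2 := by positivity
  have hsinh2 : 0 < Real.sinh (2*(b*L)) := by rw [Real.sinh_pos_iff]; positivity
  have hD : 0 < b * Real.sinh (2*(b*L)) := by positivity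
  -- bound on first integral
  have hI1 : |∫ s in (-L)..t, Real.sinh (b*(L+s)) * h s| ≤ C * (Real.cosh (b*(L+t)) - 1) / b := by
    have step1 : |∫ s in (-L)..t, Real.sinh (b*(L+s)) * h s|
        ≤ ∫ s in (-L)..t, |Real.sinh (b*(L+s))| * |h s| := by
      simpa [Real.norm_eq_abs, abs_mul] using
        intervalIntegral.norm_integral_le_integral_norm (f := fun s => Real.sinh (b*(L+s)) * h s)
          (μ := MeasureTheory.volume) (a := -L) (b := t) htl
    have step2 : (∫ s in (-L)..t, |Real.sinh (b*(L+s))| * |h s|)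
        ≤ ∫ s in (-L)..t, C * Real.sinh (b*(L+s)) := by
      apply intervalIntegral.integral_mono_on htl
      · exact (((Real.continuous_sinh.comp (contlinp L b)).abs.mul hh.abs).intervalIntegrable _ _)
      · exact ((continuous_const.mul (Real.continuous_sinh.comp (contlinp L b))).intervalIntegrable _ _)
      · intro s hs
        have hsn : 0 ≤ Real.sinh (b*(L+s)) := by
          rw [Real.sinh_nonneg_iff]
          nlinarith [hs.1]
        rw [abs_of_nonneg hsn]
        have := hC s ⟨hs.1, le_trans hs.2 htr⟩
        nlinarith [abs_nonneg (h s)]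
    have step3 : (∫ s in (-L)..t, C * Real.sinh (b*(L+s)))
        = C * (Real.cosh (b*(L+t)) - 1) / b := by
      have : ∀ x ∈ Set.uIcc (-L) t, HasDerivAt (fun s => C * Real.cosh (b*(L+s)) / b)
          (C * Real.sinh (b*(L+x))) x := by
        intro x _
        have := ((hasDerivAt_C2 L b x).const_mul C).div_const b
        refine this.congr_deriv ?_
        field_simp
      rw [intervalIntegral.integral_eq_sub_of_hasDerivAt this
        ((continuous_const.mul (Real.continuous_sinh.comp (contlinp L b))).intervalIntegrable _ _)]
      have : b*(L+(-L)) = 0 := by ring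
      rw [this, Real.cosh_zero]
      field_simp
    calc |∫ s in (-L)..t, Real.sinh (b*(L+s)) * h s| ≤ _ := step1
      _ ≤ _ := step2
      _ = _ := step3
  -- bound on second integral
  have hI2 : |∫ s in t..L, Real.sinh (b*(L-s)) * h s| ≤ C * (Real.cosh (b*(L-t)) - 1) / b := by
    have step1 : |∫ s in t..L, Real.sinh (b*(L-s)) * h s|
        ≤ ∫ s in t..L, |Real.sinh (b*(L-s))| * |h s| := by
      simpa [Real.norm_eq_abs, abs_mul] using
        intervalIntegral.norm_integral_le_integral_norm (f := fun s => Real.sinh (b*(L-s)) * h s)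
          (μ := MeasureTheory.volume) (a := t) (b := L) htr
    have step2 : (∫ s in t..L, |Real.sinh (b*(L-s))| * |h s|)
        ≤ ∫ s in t..L, C * Real.sinh (b*(L-s)) := by
      apply intervalIntegral.integral_mono_on htr
      · exact (((Real.continuous_sinh.comp (contlinm L b)).abs.mul hh.abs).intervalIntegrable _ _)
      · exact ((continuous_const.mul (Real.continuous_sinh.comp (contlinm L b))).intervalIntegrable _ _)
      · intro s hs
        have hsn : 0 ≤ Real.sinh (b*(L-s)) := by
          rw [Real.sinh_nonneg_iff]
          nlinarith [hs.2]
        rw [abs_of_nonneg hsn]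
        have := hC s ⟨le_trans htl hs.1, hs.2⟩
        nlinarith [abs_nonneg (h s)]
    have step3 : (∫ s in t..L, C * Real.sinh (b*(L-s)))
        = C * (Real.cosh (b*(L-t)) - 1) / b := by
      have : ∀ x ∈ Set.uIcc t L, HasDerivAt (fun s => -(C * Real.cosh (b*(L-s)) / b))
          (C * Real.sinh (b*(L-x))) x := by
        intro x _
        have := (((hasDerivAt_C1 L b x).const_mul C).div_const b).neg
        refine this.congr_deriv ?_
        field_simp
      rw [intervalIntegral.integral_eq_sub_of_hasDerivAt this
        ((continuous_const.mul (Real.continuous_sinh.comp (contlinm L b))).intervalIntegrable _ _)]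
      have : b*(L-L) = 0 := by ring
      rw [this, Real.cosh_zero]
      field_simp
      ring
    calc |∫ s in t..L, Real.sinh (b*(L-s)) * h s| ≤ _ := step1
      _ ≤ _ := step2
      _ = _ := step3
  -- assemble
  have hs1 : 0 ≤ Real.sinh (b*(L-t)) := by rw [Real.sinh_nonneg_iff]; nlinarith
  have hs2 : 0 ≤ Real.sinh (b*(L+t)) := by rw [Real.sinh_nonneg_iff]; nlinarith
  have hnum : |Real.sinh (b*(L-t)) * (∫ s in (-L)..t, Real.sinh (b*(L+s)) * h s)
      + Real.sinh (b*(L+t)) * (∫ s in t..L, Real.sinh (b*(L-s)) * h s)|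
      ≤ Real.sinh (b*(L-t)) * (C * (Real.cosh (b*(L+t)) - 1) / b)
        + Real.sinh (b*(L+t)) * (C * (Real.cosh (b*(L-t)) - 1) / b) := by
    calc _ ≤ |Real.sinh (b*(L-t)) * (∫ s in (-L)..t, Real.sinh (b*(L+s)) * h s)|
          + |Real.sinh (b*(L+t)) * (∫ s in t..L, Real.sinh (b*(L-s)) * h s)| := abs_add_le _ _
      _ ≤ _ := by
          rw [abs_mul, abs_mul, abs_of_nonneg hs1, abs_of_nonneg hs2]
          gcongr
  unfold solW
  rw [abs_div, abs_of_pos hD, div_le_div_iff₀ hD (by positivity)]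
  have key : (Real.sinh (b*(L-t)) * (C * (Real.cosh (b*(L+t)) - 1) / b)
        + Real.sinh (b*(L+t)) * (C * (Real.cosh (b*(L-t)) - 1) / b)) * b^2
      ≤ (1 - 1/Real.cosh (b*L)) * C * (b * Real.sinh (2*(b*L))) := by
    have id1 : Real.sinh (b*(L-t)) * Real.cosh (b*(L+t))
        + Real.cosh (b*(L-t)) * Real.sinh (b*(L+t)) = Real.sinh (2*(b*L)) := by
      rw [show 2*(b*L) = b*(L-t) + b*(L+t) by ring, Real.sinh_add]
    have id2 : Real.sinh (b*(L-t)) + Real.sinh (b*(L+t))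
        = 2 * Real.sinh (b*L) * Real.cosh (b*t) := by
      rw [show b*(L-t) = b*L - b*t by ring, show b*(L+t) = b*L + b*t by ring,
        Real.sinh_sub, Real.sinh_add]
      ring
    have id3 : Real.sinh (2*(b*L)) = 2 * Real.sinh (b*L) * Real.cosh (b*L) := by
      rw [show 2*(b*L) = b*L + b*L by ring, Real.sinh_add]; ring
    have hcL : 1 ≤ Real.cosh (b*L) := Real.one_le_cosh _
    have hct : 1 ≤ Real.cosh (b*t) := Real.one_le_cosh _
    have hsL : 0 < Real.sinh (b*L) := by rw [Real.sinh_pos_iff]; positivity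
    have hcLpos : (0:ℝ) < Real.cosh (b*L) := by linarith
    have lhs_eq : (Real.sinh (b*(L-t)) * (C * (Real.cosh (b*(L+t)) - 1) / b)
        + Real.sinh (b*(L+t)) * (C * (Real.cosh (b*(L-t)) - 1) / b)) * b^2
        = C * b * (Real.sinh (2*(b*L)) - 2 * Real.sinh (b*L) * Real.cosh (b*t)) := by
      rw [← id1, ← id2]
      field_simp
      ring
    rw [lhs_eq, id3]
    have rhs_eq : (1 - 1/Real.cosh (b*L)) * C * (b * (2 * Real.sinh (b*L) * Real.cosh (b*L)))
        = C * b * (2 * Real.sinh (b*L) * Real.cosh (b*L) - 2 * Real.sinh (b*L)) := by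
      field_simp
    rw [rhs_eq]
    have hfin : 0 ≤ C * b * (2*Real.sinh (b*L) * Real.cosh (b*t) - 2*Real.sinh (b*L)) := by
      apply mul_nonneg (mul_nonneg hC0 hb.le)
      nlinarith
    nlinarith [hfin]
  calc |Real.sinh (b*(L-t)) * (∫ s in (-L)..t, Real.sinh (b*(L+s)) * h s)
      + Real.sinh (b*(L+t)) * (∫ s in t..L, Real.sinh (b*(L-s)) * h s)| * b^2
      ≤ (Real.sinh (b*(L-t)) * (C * (Real.cosh (b*(L+t)) - 1) / b)
        + Real.sinh (b*(L+t)) * (C * (Real.cosh (b*(L-t)) - 1) / b)) * b^2 := by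
        gcongr
    _ ≤ _ := key

open BoundedContinuousFunction in
set_option maxHeartbeats 1600000 in
/-- Existence of a solution of the Dirichlet problem
`u'' - a(t) u³ = f(t)` on `(-L, L)`, `u(-L) = u(L) = 0`, for continuous `a > 0`
and continuous `f` on `[-L, L]`. -/
theorem stmt7 (L : ℝ) (hL : 0 < L) (a f : ℝ → ℝ)
    (ha_cont : ContinuousOn a (Set.Icc (-L) L))
    (hf_cont : ContinuousOn f (Set.Icc (-L) L))
    (ha_pos : ∀ t ∈ Set.Icc (-L) L, 0 < a t) :
    ∃ u : ℝ → ℝ, ContDiffOn ℝ 2 u (Set.Icc (-L) L) ∧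
      (∀ t ∈ Set.Ioo (-L) L, deriv (deriv u) t - a t * u t ^ 3 = f t) ∧
      u (-L) = 0 ∧ u L = 0 := by
  have hLL : (-L : ℝ) ≤ L := by linarith
  have hIc : IsCompact (Set.Icc (-L) L) := isCompact_Icc
  have hIne : (Set.Icc (-L) L).Nonempty := ⟨-L, ⟨le_refl _, hLL⟩⟩
  -- projection onto the interval
  set pr : ℝ → ℝ := fun t => (Set.projIcc (-L) L hLL t : ℝ) with hprdef
  have hprc : Continuous pr := continuous_subtype_val.comp continuous_projIcc
  have hprmem : ∀ t, pr t ∈ Set.Icc (-L) L := fun t => (Set.projIcc (-L) L hLL t).2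
  have hprid : ∀ t ∈ Set.Icc (-L) L, pr t = t := by
    intro t ht
    simp only [hprdef, Set.projIcc_of_mem hLL ht]
  set af : ℝ → ℝ := fun t => a (pr t) with hafdef
  set ff : ℝ → ℝ := fun t => f (pr t) with hffdef
  have hafc : Continuous af := ha_cont.comp_continuous hprc hprmem
  have hffc : Continuous ff := hf_cont.comp_continuous hprc hprmem
  have hafI : ∀ t ∈ Set.Icc (-L) L, af t = a t := by
    intro t ht; simp only [hafdef]; rw [hprid t ht]
  have hffI : ∀ t ∈ Set.Icc (-L) L, ff t = f t := by
    intro t ht; simp only [hffdef]; rw [hprid t ht]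
  -- constants
  obtain ⟨t0, ht0, hmin⟩ := hIc.exists_isMinOn hIne ha_cont
  obtain ⟨t1, ht1, hmax1⟩ := hIc.exists_isMaxOn hIne ha_cont
  obtain ⟨t2, ht2, hmax2⟩ := hIc.exists_isMaxOn hIne hf_cont.abs
  set a0 : ℝ := a t0 with ha0def
  set a1 : ℝ := a t1 with ha1def
  set F : ℝ := |f t2| with hFdef
  have ha0 : 0 < a0 := ha_pos t0 ht0
  have ha0le : ∀ s ∈ Set.Icc (-L) L, a0 ≤ a s := fun s hs => hmin hs
  have ha1le : ∀ s ∈ Set.Icc (-L) L, a s ≤ a1 := fun s hs => hmax1 hs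
  have ha1 : 0 < a1 := ha_pos t1 ht1
  have hF0 : 0 ≤ F := abs_nonneg _
  have hFle : ∀ s ∈ Set.Icc (-L) L, |f s| ≤ F := fun s hs => hmax2 hs
  -- the truncation level M
  set M : ℝ := ((F+1)/a0) ^ (3⁻¹ : ℝ) with hMdef
  have hM0 : 0 < M := Real.rpow_pos_of_pos (by positivity) _
  have hM3 : a0 * M^3 = F + 1 := by
    have : M^3 = (F+1)/a0 := by
      rw [hMdef, ← Real.rpow_natCast (((F+1)/a0) ^ (3⁻¹:ℝ)) 3, ← Real.rpow_mul (by positivity)]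
      norm_num
    rw [this]; field_simp
  set lam : ℝ := 3*a1*M^2 + 1 with hlamdef
  have hlam : 0 < lam := by positivity
  set b : ℝ := Real.sqrt lam with hbdef
  have hb : 0 < b := Real.sqrt_pos.mpr hlam
  have hb2 : b^2 = lam := Real.sq_sqrt hlam.le
  -- the clamp function
  set c : ℝ → ℝ := fun x => max (-M) (min M x) with hcdef
  have hc_cont : Continuous c := continuous_const.max (continuous_const.min continuous_id)
  have hc_eq : ∀ x, |x| ≤ M → c x = x := by
    intro x hx
    obtain ⟨h1, h2⟩ := abs_le.mp hx
    simp only [hcdef]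
    rw [min_eq_right h2, max_eq_right h1]
  have hc_le : ∀ x, -M ≤ c x ∧ c x ≤ M := by
    intro x
    refine ⟨le_max_left _ _, max_le (by linarith) (min_le_left _ _)⟩
  have hc_mono : Monotone c := by
    intro x y hxy
    exact max_le_max (le_refl _) (min_le_min (le_refl _) hxy)
  have hc_lip : ∀ x y, x ≤ y → c y - c x ≤ y - x := by
    intro x y hxy
    simp only [hcdef]
    rcases le_total M x with h | h
    · rw [min_eq_left h, min_eq_left (le_trans h hxy)]; linarith
    · rw [min_eq_right h]
      rcases le_total M y with h' | h'
      · rw [min_eq_left h']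
        have : max (-M) M ≤ M := max_le (by linarith) (le_refl _)
        have h2 : x ≤ max (-M) x := le_max_right _ _
        linarith
      · rw [min_eq_right h']
        rcases le_total (-M) x with h'' | h''
        · rw [max_eq_right h'', max_eq_right (le_trans h'' hxy)]
        · rw [max_eq_left h'']
          rcases le_total (-M) y with h3 | h3
          · rw [max_eq_right h3]; linarith
          · rw [max_eq_left h3]; linarith
  -- key Lipschitz estimate for the truncated nonlinearity
  have key : ∀ A x y : ℝ, 0 ≤ A → A ≤ a1 →
      |(lam*x - A*(c x)^3) - (lam*y - A*(c y)^3)| ≤ lam * |x-y| := by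
    have main : ∀ A x y : ℝ, 0 ≤ A → A ≤ a1 → y ≤ x →
        |(lam*x - A*(c x)^3) - (lam*y - A*(c y)^3)| ≤ lam * |x-y| := by
      intro A x y hA0 hA1 hyx
      have hcm : c y ≤ c x := hc_mono hyx
      have hlipxy : c x - c y ≤ x - y := hc_lip y x hyx
      obtain ⟨hbx1, hbx2⟩ := hc_le x
      obtain ⟨hby1, hby2⟩ := hc_le y
      have hq1 : 0 ≤ (c x)^2 + (c x)*(c y) + (c y)^2 := by
        nlinarith [sq_nonneg (c x + c y), sq_nonneg (c x - c y)]
      have hq2 : (c x)^2 + (c x)*(c y) + (c y)^2 ≤ 3*M^2 := by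
        nlinarith [sq_nonneg (c x - c y), sq_nonneg (c x + c y), sq_nonneg (c x),
          sq_nonneg (c y), mul_self_nonneg (M - c x), mul_self_nonneg (M + c x),
          mul_self_nonneg (M - c y), mul_self_nonneg (M + c y)]
      have hprod : (c x - c y) * ((c x)^2 + (c x)*(c y) + (c y)^2) ≤ (x - y) * (3*M^2) :=
        mul_le_mul hlipxy hq2 hq1 (by linarith)
      have hcube : (c x)^3 - (c y)^3 ≤ 3*M^2*(x-y) := by nlinarith [hprod]
      have hcube0 : 0 ≤ (c x)^3 - (c y)^3 := by
        nlinarith [mul_nonneg (sub_nonneg.mpr hcm) hq1]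
      rw [abs_of_nonneg (by linarith : (0:ℝ) ≤ x - y), abs_le]
      have hAc : 0 ≤ A * ((c x)^3 - (c y)^3) := mul_nonneg hA0 hcube0
      have hAc2 : A * ((c x)^3 - (c y)^3) ≤ a1 * (3*M^2*(x-y)) := by nlinarith
      constructor
      · simp only [hlamdef]
        nlinarith
      · nlinarith
    intro A x y hA0 hA1
    rcases le_total y x with h | h
    · exact main A x y hA0 hA1 h
    · rw [abs_sub_comm, abs_sub_comm x y]
      exact main A y x hA0 hA1 h
  -- the nonlinearity
  set N : (BoundedContinuousFunction ℝ ℝ) → ℝ → ℝ := fun u s => lam * u s - ff s - af s * (c (u s))^3 with hNdef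
  have hNc : ∀ u : BoundedContinuousFunction ℝ ℝ, Continuous (N u) := by
    intro u
    exact ((continuous_const.mul u.continuous).sub hffc).sub
      (hafc.mul ((hc_cont.comp u.continuous).pow 3))
  have hafpos : ∀ s, 0 < af s := fun s => ha_pos _ (hprmem s)
  have hafle : ∀ s, af s ≤ a1 := fun s => ha1le _ (hprmem s)
  have hffle : ∀ s, |ff s| ≤ F := fun s => hFle _ (hprmem s)
  have hNb : ∀ u : BoundedContinuousFunction ℝ ℝ, ∀ s, |N u s| ≤ lam * ‖u‖ + (F + a1 * M^3) := by
    intro u s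
    simp only [hNdef]
    have h1 : |lam * u s| ≤ lam * ‖u‖ := by
      rw [abs_mul, abs_of_pos hlam]
      exact mul_le_mul_of_nonneg_left (by simpa [Real.norm_eq_abs] using u.norm_coe_le_norm s) hlam.le
    have h2 : |af s * (c (u s))^3| ≤ a1 * M^3 := by
      rw [abs_mul]
      have hc3 : |(c (u s))^3| ≤ M^3 := by
        rw [abs_pow]
        have : |c (u s)| ≤ M := abs_le.mpr (hc_le _)
        exact pow_le_pow_left₀ (abs_nonneg _) this 3
      rw [abs_of_pos (hafpos s)]
      exact mul_le_mul (hafle s) hc3 (abs_nonneg _) ha1.le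
    calc |lam * u s - ff s - af s * (c (u s))^3|
        ≤ |lam * u s - ff s| + |af s * (c (u s))^3| := abs_sub _ _
      _ ≤ |lam * u s| + |ff s| + |af s * (c (u s))^3| := by
          have := abs_sub (lam * u s) (ff s)
          linarith
      _ ≤ lam * ‖u‖ + (F + a1 * M^3) := by
          have := hffle s
          linarith
  have hNdiff : ∀ u v : BoundedContinuousFunction ℝ ℝ, ∀ s, |N u s - N v s| ≤ lam * dist u v := by
    intro u v s
    have h1 : N u s - N v s = (lam * u s - af s * (c (u s))^3) - (lam * v s - af s * (c (v s))^3) := by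
      simp only [hNdef]; ring
    rw [h1]
    calc |(lam * u s - af s * (c (u s))^3) - (lam * v s - af s * (c (v s))^3)|
        ≤ lam * |u s - v s| := key (af s) (u s) (v s) (hafpos s).le (hafle s)
      _ ≤ lam * dist u v := by
          have := BoundedContinuousFunction.dist_coe_le_dist (f := u) (g := v) s
          rw [Real.dist_eq] at this
          exact mul_le_mul_of_nonneg_left this hlam.le
  -- the contraction constant
  set K : ℝ := 1 - 1/Real.cosh (b*L) with hKdef
  have hcosh1 : 1 ≤ Real.cosh (b*L) := Real.one_le_cosh _
  have hcoshpos : 0 < Real.cosh (b*L) := by linarith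
  have hK0 : 0 ≤ K := by
    simp only [hKdef]
    have : 1/Real.cosh (b*L) ≤ 1 := by
      rw [div_le_one hcoshpos]; exact hcosh1
    linarith
  have hK1 : K < 1 := by
    simp only [hKdef]
    have : 0 < 1/Real.cosh (b*L) := by positivity
    linarith
  -- the map Φ
  have cW : ∀ u : BoundedContinuousFunction ℝ ℝ, Continuous (fun t => solW L b (N u) (pr t)) := by
    intro u
    have : Continuous (solW L b (N u)) := by
      apply (Differentiable.continuous (fun t => (hasDerivAt_solW L b (hNc u) t).differentiableAt))
    exact this.comp hprc
  have bW : ∀ u : BoundedContinuousFunction ℝ ℝ, ∀ t : ℝ,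
      ‖solW L b (N u) (pr t)‖ ≤ (1 - 1/Real.cosh (b*L)) * (lam * ‖u‖ + (F + a1 * M^3)) / b^2 := by
    intro u t
    rw [Real.norm_eq_abs]
    exact abs_solW_le L b hL hb (hNc u) (by positivity) (fun s _ => hNb u s) (hprmem t)
  set Φ : (BoundedContinuousFunction ℝ ℝ) → (BoundedContinuousFunction ℝ ℝ) := fun u =>
    BoundedContinuousFunction.ofNormedAddCommGroup _ (cW u) _ (bW u) with hΦdef
  have hΦapp : ∀ (u : BoundedContinuousFunction ℝ ℝ) (t : ℝ), Φ u t = solW L b (N u) (pr t) := by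
    intro u t
    simp only [hΦdef, BoundedContinuousFunction.coe_ofNormedAddCommGroup]
  -- contraction
  have hcontr : ∀ u v : BoundedContinuousFunction ℝ ℝ, dist (Φ u) (Φ v) ≤ K * dist u v := by
    intro u v
    rw [BoundedContinuousFunction.dist_le (by positivity)]
    intro t
    rw [Real.dist_eq, hΦapp, hΦapp, solW_sub L b (hNc u) (hNc v) (pr t)]
    have hbnd := abs_solW_le L b hL hb ((hNc u).sub (hNc v))
      (C := lam * dist u v) (by positivity) (fun s _ => hNdiff u v s) (hprmem t)
    calc |solW L b (fun s => N u s - N v s) (pr t)|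
        ≤ (1 - 1/Real.cosh (b*L)) * (lam * dist u v) / b^2 := hbnd
      _ = K * dist u v := by
          rw [hb2]
          simp only [hKdef]
          field_simp
  have hcontracting : ContractingWith ⟨K, hK0⟩ Φ := by
    constructor
    · exact_mod_cast hK1
    · apply LipschitzWith.of_dist_le_mul
      intro u v
      exact hcontr u v
  -- the fixed point
  set u : BoundedContinuousFunction ℝ ℝ := ContractingWith.fixedPoint Φ hcontracting with hudef
  have hufix : Φ u = u := hcontracting.fixedPoint_isFixedPt
  -- the solution
  set w : ℝ → ℝ := solW L b (N u) with hwdef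
  set g : ℝ → ℝ := solG L b (N u) with hgdef
  have hNu : Continuous (N u) := hNc u
  have hw1 : ∀ t, HasDerivAt w (g t) t := hasDerivAt_solW L b hNu
  have hw2 : ∀ t, HasDerivAt g (b^2 * w t - N u t) t := hasDerivAt_solG L b hNu hb hL
  have hwc : Continuous w := Differentiable.continuous (fun t => (hw1 t).differentiableAt)
  have hgc : Continuous g := Differentiable.continuous (fun t => (hw2 t).differentiableAt)
  have hderivw : deriv w = g := funext fun t => (hw1 t).deriv
  have hderivg : deriv g = fun t => b^2 * w t - N u t := funext fun t => (hw2 t).deriv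
  have huw : ∀ t ∈ Set.Icc (-L) L, u t = w t := by
    intro t ht
    conv_lhs => rw [← hufix]
    rw [hΦapp, hprid t ht]
  have hwl : w (-L) = 0 := solW_left L b _
  have hwr : w L = 0 := solW_right L b _
  -- continuity of the second derivative function
  set G : ℝ → ℝ := fun t => b^2 * w t - N u t with hGdef
  have hGc : Continuous G := (continuous_const.mul hwc).sub hNu
  clear_value N u w g G
  -- maximum principle: upper bound
  have hup : ∀ s ∈ Set.Icc (-L) L, w s ≤ M := by
    obtain ⟨p, hp, hmaxw⟩ := hIc.exists_isMaxOn hIne hwc.continuousOn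
    intro s hs
    have hle : w s ≤ w p := hmaxw hs
    suffices hwp : w p ≤ M by linarith
    by_contra hcon
    push_neg at hcon
    have hne1 : p ≠ -L := by
      intro h; rw [h, hwl] at hcon; linarith
    have hne2 : p ≠ L := by
      intro h; rw [h, hwr] at hcon; linarith
    have hpo : p ∈ Set.Ioo (-L) L :=
      ⟨lt_of_le_of_ne hp.1 (Ne.symm hne1), lt_of_le_of_ne hp.2 hne2⟩
    have hloc : IsLocalMax w p := hmaxw.isLocalMax (Icc_mem_nhds hpo.1 hpo.2)
    have hg0 : g p = 0 := by rw [← hderivw]; exact hloc.deriv_eq_zero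
    have hG1 : 1 ≤ G p := by
      have hcM : c (w p) = M := by
        simp only [hcdef]
        rw [min_eq_left hcon.le, max_eq_right (by linarith)]
      simp only [hGdef, hNdef]
      rw [huw p hp] at *
      rw [hcM, hb2, hffI p hp, hafI p hp]
      have h1 : -F ≤ f p := by
        have := hFle p hp; rw [abs_le] at this; linarith [this.1]
      have h2 : a0 * M^3 ≤ a p * M^3 := by
        have := ha0le p hp; nlinarith
      nlinarith
    -- find a small interval to the right of p where G > 0
    have hGcont : ContinuousAt G p := hGc.continuousAt
    rw [Metric.continuousAt_iff] at hGcont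
    obtain ⟨ε, hε, hball⟩ := hGcont (1/2) (by norm_num)
    set δ : ℝ := min (ε/2) ((L - p)/2) with hδdef
    have hδ0 : 0 < δ := by
      apply lt_min (by linarith)
      have := hpo.2; linarith
    have hδL : p + δ < L := by
      have h1 : δ ≤ (L - p)/2 := min_le_right _ _
      have := hpo.2; linarith
    have hGpos : ∀ x ∈ Set.Icc p (p + δ), 0 < G x := by
      intro x hx
      have hd : dist x p < ε := by
        rw [Real.dist_eq, abs_lt]
        have h1 : δ ≤ ε/2 := min_le_left _ _
        constructor <;> [linarith [hx.1]; linarith [hx.2]]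
      have h56 := hball hd
      rw [Real.dist_eq, abs_lt] at h56
      linarith [h56.1, hG1]
    have hsub : Set.Icc p (p + δ) ⊆ Set.Icc (-L) L := by
      intro x hx
      exact ⟨le_trans hp.1 hx.1, le_trans hx.2 hδL.le⟩
    have hgmono : StrictMonoOn g (Set.Icc p (p + δ)) := by
      apply strictMonoOn_of_deriv_pos (convex_Icc _ _) hgc.continuousOn
      intro x hx
      rw [interior_Icc] at hx
      rw [hderivg]
      exact hGpos x ⟨hx.1.le, hx.2.le⟩
    have hgpos : ∀ x ∈ Set.Ioo p (p + δ), 0 < g x := by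
      intro x hx
      have := hgmono ⟨le_refl _, by linarith⟩ ⟨hx.1.le, hx.2.le⟩ hx.1
      rw [hg0] at this
      exact this
    have hwmono : StrictMonoOn w (Set.Icc p (p + δ)) := by
      apply strictMonoOn_of_deriv_pos (convex_Icc _ _) hwc.continuousOn
      intro x hx
      rw [interior_Icc] at hx
      rw [hderivw]
      exact hgpos x hx
    have h1 : w p < w (p + δ) :=
      hwmono ⟨le_refl _, by linarith⟩ ⟨by linarith, le_refl _⟩ (by linarith)
    have h2 : w (p + δ) ≤ w p := hmaxw (hsub ⟨by linarith, le_refl _⟩)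
    linarith
  -- maximum principle: lower bound
  have hlo : ∀ s ∈ Set.Icc (-L) L, -M ≤ w s := by
    obtain ⟨p, hp, hminw⟩ := hIc.exists_isMinOn hIne hwc.continuousOn
    intro s hs
    have hle : w p ≤ w s := hminw hs
    suffices hwp : -M ≤ w p by linarith
    by_contra hcon
    push_neg at hcon
    have hne1 : p ≠ -L := by
      intro h; rw [h, hwl] at hcon; linarith
    have hne2 : p ≠ L := by
      intro h; rw [h, hwr] at hcon; linarith
    have hpo : p ∈ Set.Ioo (-L) L :=
      ⟨lt_of_le_of_ne hp.1 (Ne.symm hne1), lt_of_le_of_ne hp.2 hne2⟩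
    have hloc : IsLocalMin w p := hminw.isLocalMin (Icc_mem_nhds hpo.1 hpo.2)
    have hg0 : g p = 0 := by rw [← hderivw]; exact hloc.deriv_eq_zero
    have hG1 : G p ≤ -1 := by
      have hcM : c (w p) = -M := by
        simp only [hcdef]
        rw [min_eq_right (by linarith), max_eq_left hcon.le]
      simp only [hGdef, hNdef]
      rw [huw p hp] at *
      rw [hcM, hb2, hffI p hp, hafI p hp]
      have h1 : f p ≤ F := by
        have := hFle p hp; rw [abs_le] at this; linarith [this.2]
      have h2 : a0 * M^3 ≤ a p * M^3 := by
        have := ha0le p hp; nlinarith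
      nlinarith
    have hGcont : ContinuousAt G p := hGc.continuousAt
    rw [Metric.continuousAt_iff] at hGcont
    obtain ⟨ε, hε, hball⟩ := hGcont (1/2) (by norm_num)
    set δ : ℝ := min (ε/2) ((L - p)/2) with hδdef
    have hδ0 : 0 < δ := by
      apply lt_min (by linarith)
      have := hpo.2; linarith
    have hδL : p + δ < L := by
      have h1 : δ ≤ (L - p)/2 := min_le_right _ _
      have := hpo.2; linarith
    have hGneg : ∀ x ∈ Set.Icc p (p + δ), G x < 0 := by
      intro x hx
      have hd : dist x p < ε := by
        rw [Real.dist_eq, abs_lt]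
        have h1 : δ ≤ ε/2 := min_le_left _ _
        constructor <;> [linarith [hx.1]; linarith [hx.2]]
      have h56 := hball hd
      rw [Real.dist_eq, abs_lt] at h56
      linarith [h56.2, hG1]
    have hsub : Set.Icc p (p + δ) ⊆ Set.Icc (-L) L := by
      intro x hx
      exact ⟨le_trans hp.1 hx.1, le_trans hx.2 hδL.le⟩
    have hganti : StrictAntiOn g (Set.Icc p (p + δ)) := by
      apply strictAntiOn_of_deriv_neg (convex_Icc _ _) hgc.continuousOn
      intro x hx
      rw [interior_Icc] at hx
      rw [hderivg]
      exact hGneg x ⟨hx.1.le, hx.2.le⟩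
    have hgneg : ∀ x ∈ Set.Ioo p (p + δ), g x < 0 := by
      intro x hx
      have := hganti ⟨le_refl _, by linarith⟩ ⟨hx.1.le, hx.2.le⟩ hx.1
      rw [hg0] at this
      exact this
    have hwanti : StrictAntiOn w (Set.Icc p (p + δ)) := by
      apply strictAntiOn_of_deriv_neg (convex_Icc _ _) hwc.continuousOn
      intro x hx
      rw [interior_Icc] at hx
      rw [hderivw]
      exact hgneg x hx
    have h1 : w (p + δ) < w p :=
      hwanti ⟨le_refl _, by linarith⟩ ⟨by linarith, le_refl _⟩ (by linarith)
    have h2 : w p ≤ w (p + δ) := hminw (hsub ⟨by linarith, le_refl _⟩)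
    linarith
  -- conclusion
  refine ⟨w, ?_, ?_, hwl, hwr⟩
  · -- smoothness
    have h2 : ContDiff ℝ 2 w := by
      rw [show (2 : WithTop ℕ∞) = 1 + 1 from by norm_num]
      rw [contDiff_succ_iff_deriv]
      refine ⟨fun t => (hw1 t).differentiableAt, ?_, ?_⟩
      · intro h; exact absurd h (by norm_num)
      · rw [hderivw, contDiff_one_iff_deriv]
        refine ⟨fun t => (hw2 t).differentiableAt, ?_⟩
        rw [hderivg]
        exact hGc
    exact h2.contDiffOn
  · intro t ht
    have htI : t ∈ Set.Icc (-L) L := Set.Ioo_subset_Icc_self ht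
    have hdd : deriv (deriv w) t = b^2 * w t - N u t := by
      rw [hderivw]; exact (hw2 t).deriv
    have h1 : u t = w t := huw t htI
    have h3 : c (w t) = w t := hc_eq _ (abs_le.mpr ⟨hlo t htI, hup t htI⟩)
    rw [hdd]
    simp only [hNdef]
    rw [h1, h3, hb2, hffI t htI, hafI t htI]
    ring
end

section
/- Let n > 1, m ≥ 1, L > 0. Let a, f₁, …, f_m : ℝⁿ → ℝ be continuous with a₀ ≤ a(x) and |fᵢ(x)| ≤ M for all x and i, for constants a₀ > 0 and M > 0, and let V : ℝ^m → ℝ be continuously differentiable such that for each i, V_{z_i}(z) → ∞ as z_i → ∞ and V_{z_i}(z) → −∞ as z_i → −∞, uniformly in the other coordinates. Then there exists a constant K₀ > 0 depending only on a₀, M and V (not on L) such that every u = (u₁, …, u_m) ∈ C²(B̄_L(0); ℝ^m) satisfying Δuᵢ − a(x)V_{z_i}(u) = fᵢ(x) in B_L(0) and uᵢ = 0 on ∂B_L(0) for all i obeys |uᵢ(x)| ≤ K₀ for all x ∈ B̄_L(0) and all i. In particular, if uᵢ attains a positive maximum at an interior point x₀ ∈ B_L(0), then V_{z_i}(u(x₀))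 ≤ M/a₀. -/
/-- The Laplacian of `u : ℝⁿ → ℝ`: `Δu(x) = Σ_k ∂²u/∂x_k²(x)`. -/
noncomputable def laplacian {n : ℕ} (u : EuclideanSpace ℝ (Fin n) → ℝ)
    (x : EuclideanSpace ℝ (Fin n)) : ℝ :=
  ∑ k : Fin n, iteratedFDeriv ℝ 2 u x ![EuclideanSpace.single k 1, EuclideanSpace.single k 1]

open Metric Set Filter

/-- Second derivative test: at a local max of a C² function, the second derivative is ≤ 0. -/
lemma my_secondDeriv_nonpos {φ : ℝ → ℝ} (hφ : ContDiffAt ℝ 2 φ 0)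
    (hmax : IsLocalMax φ 0) : deriv (deriv φ) 0 ≤ 0 := by
  by_contra hlt
  push_neg at hlt
  obtain ⟨u, hu, hcd⟩ := hφ.contDiffOn le_rfl (by norm_num)
  have hso : IsOpen (interior u) := isOpen_interior
  have h0s : (0:ℝ) ∈ interior u := mem_interior_iff_mem_nhds.2 hu
  have hcd2 : ContDiffOn ℝ 2 φ (interior u) := hcd.mono interior_subset
  have h2 := (contDiffOn_succ_iff_deriv_of_isOpen (n := 1) hso).mp
    (by exact_mod_cast hcd2)
  obtain ⟨hdiff, -, hcd1⟩ := h2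
  have h1 := (contDiffOn_succ_iff_deriv_of_isOpen (n := 0) hso).mp
    (by exact_mod_cast hcd1)
  obtain ⟨hdiff1, -, hcont0⟩ := h1
  have hcont2 : ContinuousOn (deriv (deriv φ)) (interior u) := hcont0.continuousOn
  have hca : ContinuousAt (deriv (deriv φ)) 0 := hcont2.continuousAt (hso.mem_nhds h0s)
  have hposset : (deriv (deriv φ)) ⁻¹' (Ioi 0) ∈ nhds (0:ℝ) :=
    hca.preimage_mem_nhds (Ioi_mem_nhds hlt)
  have hmaxset : {t : ℝ | φ t ≤ φ 0} ∈ nhds (0:ℝ) := hmax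
  obtain ⟨ε, hε, hball⟩ := Metric.mem_nhds_iff.mp
    (inter_mem (inter_mem (hso.mem_nhds h0s) hposset) hmaxset)
  have hIoo : Ioo (-ε) ε ⊆ interior u ∩ (deriv (deriv φ)) ⁻¹' (Ioi 0) ∩ {t | φ t ≤ φ 0} := by
    intro t ht
    apply hball
    rw [Real.ball_eq_Ioo]
    simpa using ht
  have hmono : StrictMonoOn (deriv φ) (Ioo (-ε) ε) := by
    apply strictMonoOn_of_deriv_pos (convex_Ioo _ _)
    · intro t ht
      exact ((hdiff1 t (hIoo ht).1.1).differentiableAt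
        (hso.mem_nhds (hIoo ht).1.1)).continuousAt.continuousWithinAt
    · intro t ht
      rw [interior_Ioo] at ht
      exact (hIoo ht).1.2
  have hd0 : deriv φ 0 = 0 := hmax.deriv_eq_zero
  have hIcc : Icc (0:ℝ) (ε/2) ⊆ Ioo (-ε) ε := by
    intro t ht
    constructor <;> [linarith [ht.1]; linarith [ht.2]]
  have hmono2 : StrictMonoOn φ (Icc 0 (ε/2)) := by
    apply strictMonoOn_of_deriv_pos (convex_Icc _ _)
    · intro t ht
      exact ((hdiff t (hIoo (hIcc ht)).1.1).differentiableAt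
        (hso.mem_nhds (hIoo (hIcc ht)).1.1)).continuousAt.continuousWithinAt
    · intro t ht
      rw [interior_Icc] at ht
      have ht' : t ∈ Ioo (-ε) ε := ⟨by linarith [ht.1], by linarith [ht.2]⟩
      have := hmono ⟨by linarith, hε⟩ ht' ht.1
      rw [hd0] at this
      exact this
  have h1 : φ 0 < φ (ε/2) :=
    hmono2 ⟨le_rfl, by linarith⟩ ⟨by linarith, le_rfl⟩ (by linarith)
  have h2 : φ (ε/2) ≤ φ 0 := (hIoo (hIcc ⟨by linarith, le_rfl⟩)).2
  linarith

lemma my_line_deriv {E : Type*} [NormedAddCommGroup E] [NormedSpace ℝ E]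
    {g : E → ℝ} {x₀ : E} (hg : ContDiffAt ℝ 2 g x₀) (v : E) :
    deriv (deriv (fun t : ℝ => g (x₀ + t • v))) 0 = fderiv ℝ (fderiv ℝ g) x₀ v v := by
  have hγd : ∀ t : ℝ, HasDerivAt (fun t : ℝ => x₀ + t • v) v t := by
    intro t
    simpa using (((hasDerivAt_id t).smul_const v).const_add x₀)
  have hγc : Continuous (fun t : ℝ => x₀ + t • v) := by continuity
  have hγ0 : x₀ + (0:ℝ) • v = x₀ := by simp
  obtain ⟨u, hu, hcd⟩ := hg.contDiffOn le_rfl (by norm_num)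
  have hso : IsOpen (interior u) := isOpen_interior
  have h0s : x₀ ∈ interior u := mem_interior_iff_mem_nhds.2 hu
  have hcd2 : ContDiffOn ℝ 2 g (interior u) := hcd.mono interior_subset
  have hgs : ∀ y ∈ interior u, DifferentiableAt ℝ g y := fun y hy =>
    ((hcd2.differentiableOn (by norm_num)).differentiableAt (hso.mem_nhds hy))
  have hpre : (fun t : ℝ => x₀ + t • v) ⁻¹' (interior u) ∈ nhds (0:ℝ) := by
    apply hγc.continuousAt.preimage_mem_nhds
    rw [hγ0]
    exact hso.mem_nhds h0s
  have heq : deriv (fun t : ℝ => g (x₀ + t • v)) =ᶠ[nhds (0:ℝ)]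
      (fun t : ℝ => fderiv ℝ g (x₀ + t • v) v) := by
    filter_upwards [hpre] with t ht
    exact ((hgs _ ht).hasFDerivAt.comp_hasDerivAt t (hγd t)).deriv
  rw [heq.deriv_eq]
  have h1 : HasFDerivAt (fderiv ℝ g) (fderiv ℝ (fderiv ℝ g) x₀) (x₀ + (0:ℝ) • v) := by
    rw [hγ0]
    exact ((hg.fderiv_right (m := 1) (by norm_num)).differentiableAt (by norm_num)).hasFDerivAt
  have h2 : HasDerivAt (fun t : ℝ => fderiv ℝ g (x₀ + t • v))
      (fderiv ℝ (fderiv ℝ g) x₀ v) 0 := h1.comp_hasDerivAt 0 (hγd 0)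
  have h3 : HasDerivAt (fun t : ℝ => fderiv ℝ g (x₀ + t • v) v)
      (fderiv ℝ (fderiv ℝ g) x₀ v v) 0 :=
    (ContinuousLinearMap.apply ℝ ℝ v).hasFDerivAt.comp_hasDerivAt 0 h2
  exact h3.deriv

lemma my_secondDirDeriv_nonpos {E : Type*} [NormedAddCommGroup E] [NormedSpace ℝ E]
    {g : E → ℝ} {x₀ : E} (hg : ContDiffAt ℝ 2 g x₀) (hmax : IsLocalMax g x₀) (v : E) :
    fderiv ℝ (fderiv ℝ g) x₀ v v ≤ 0 := by
  rw [← my_line_deriv hg v]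
  apply my_secondDeriv_nonpos
  · have hγ : ContDiffAt ℝ 2 (fun t : ℝ => x₀ + t • v) 0 :=
      (contDiff_const.add (contDiff_id.smul contDiff_const)).contDiffAt
    have hg' : ContDiffAt ℝ 2 g ((fun t : ℝ => x₀ + t • v) 0) := by simpa using hg
    exact hg'.comp 0 hγ
  · have hγc : Continuous (fun t : ℝ => x₀ + t • v) := by continuity
    have htend : Filter.Tendsto (fun t : ℝ => x₀ + t • v) (nhds 0) (nhds x₀) := by
      have := hγc.continuousAt (x := (0:ℝ))
      unfold ContinuousAt at this
      simpa using this
    have := htend.eventually hmax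
    unfold IsLocalMax IsMaxFilter
    simpa using this

lemma my_laplacian_nonpos {n : ℕ} {g : EuclideanSpace ℝ (Fin n) → ℝ}
    {x₀ : EuclideanSpace ℝ (Fin n)} (hg : ContDiffAt ℝ 2 g x₀) (hmax : IsLocalMax g x₀) :
    laplacian g x₀ ≤ 0 := by
  unfold laplacian
  apply Finset.sum_nonpos
  intro k _
  rw [iteratedFDeriv_two_apply]
  simpa using my_secondDirDeriv_nonpos hg hmax (EuclideanSpace.single k 1)

lemma my_laplacian_nonneg {n : ℕ} {g : EuclideanSpace ℝ (Fin n) → ℝ}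
    {x₀ : EuclideanSpace ℝ (Fin n)} (hg : ContDiffAt ℝ 2 g x₀) (hmin : IsLocalMin g x₀) :
    0 ≤ laplacian g x₀ := by
  have hneg : laplacian (fun y => -g y) x₀ ≤ 0 :=
    my_laplacian_nonpos hg.neg hmin.neg
  have : laplacian (fun y => -g y) x₀ = -laplacian g x₀ := by
    unfold laplacian
    rw [← Finset.sum_neg_distrib]
    congr 1
    ext k
    have : (fun y => -g y) = -g := rfl
    rw [this, iteratedFDeriv_neg_apply]
    simp
  linarith [this ▸ hneg]

/-- Uniform (in `L`) `L^∞` a priori bound, via the maximum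
principle, for classical solutions of the Dirichlet problem
`Δuᵢ - a(x) V_{z_i}(u) = fᵢ(x)` in `B_L(0)`, `uᵢ = 0` on `∂B_L(0)`. In particular,
if `uᵢ` attains a positive maximum at an interior point `x₀`, then
`V_{z_i}(u(x₀)) ≤ M/a₀`. -/
theorem stmt14 (n m : ℕ) (hn : 1 < n) (hm : 1 ≤ m)
    (a : EuclideanSpace ℝ (Fin n) → ℝ) (f : Fin m → EuclideanSpace ℝ (Fin n) → ℝ)
    (ha_cont : Continuous a) (hf_cont : ∀ i, Continuous (f i))
    (a₀ M : ℝ) (ha₀ : 0 < a₀) (hM : 0 < M)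
    (ha : ∀ x, a₀ ≤ a x) (hf : ∀ i, ∀ x, |f i x| ≤ M)
    (V : (Fin m → ℝ) → ℝ) (hV : ContDiff ℝ 1 V)
    (hV_inf : ∀ i : Fin m, ∀ C > (0 : ℝ), ∃ R > (0 : ℝ), ∀ z : Fin m → ℝ,
      (R ≤ z i → C ≤ fderiv ℝ V z (Pi.single i 1)) ∧
      (z i ≤ -R → fderiv ℝ V z (Pi.single i 1) ≤ -C)) :
    (∃ K₀ > (0 : ℝ), ∀ L : ℝ, 0 < L →
      ∀ u : EuclideanSpace ℝ (Fin n) → Fin m → ℝ,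
      (∀ i : Fin m, ContDiffOn ℝ 2 (fun x => u x i) (Metric.closedBall 0 L)) →
      (∀ i : Fin m, ∀ x ∈ Metric.ball (0 : EuclideanSpace ℝ (Fin n)) L,
        laplacian (fun y => u y i) x - a x * fderiv ℝ V (u x) (Pi.single i 1) = f i x) →
      (∀ i : Fin m, ∀ x : EuclideanSpace ℝ (Fin n), ‖x‖ = L → u x i = 0) →
      ∀ x ∈ Metric.closedBall (0 : EuclideanSpace ℝ (Fin n)) L, ∀ i : Fin m,
        |u x i| ≤ K₀) ∧
    (∀ L : ℝ, 0 < L →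
      ∀ u : EuclideanSpace ℝ (Fin n) → Fin m → ℝ,
      (∀ i : Fin m, ContDiffOn ℝ 2 (fun x => u x i) (Metric.closedBall 0 L)) →
      (∀ i : Fin m, ∀ x ∈ Metric.ball (0 : EuclideanSpace ℝ (Fin n)) L,
        laplacian (fun y => u y i) x - a x * fderiv ℝ V (u x) (Pi.single i 1) = f i x) →
      (∀ i : Fin m, ∀ x : EuclideanSpace ℝ (Fin n), ‖x‖ = L → u x i = 0) →
      ∀ i : Fin m, ∀ x₀ ∈ Metric.ball (0 : EuclideanSpace ℝ (Fin n)) L,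
        (∀ x ∈ Metric.closedBall (0 : EuclideanSpace ℝ (Fin n)) L, u x i ≤ u x₀ i) →
        0 < u x₀ i →
        fderiv ℝ V (u x₀) (Pi.single i 1) ≤ M / a₀) := by
  -- interior maximum principle
  have key : ∀ L : ℝ, 0 < L →
      ∀ u : EuclideanSpace ℝ (Fin n) → Fin m → ℝ,
      (∀ i : Fin m, ContDiffOn ℝ 2 (fun x => u x i) (Metric.closedBall 0 L)) →
      (∀ i : Fin m, ∀ x ∈ Metric.ball (0 : EuclideanSpace ℝ (Fin n)) L,
        laplacian (fun y => u y i) x - a x * fderiv ℝ V (u x) (Pi.single i 1) = f i x) →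
      ∀ i : Fin m, ∀ x₀ ∈ Metric.ball (0 : EuclideanSpace ℝ (Fin n)) L,
        (∀ x ∈ Metric.closedBall (0 : EuclideanSpace ℝ (Fin n)) L, u x i ≤ u x₀ i) →
        fderiv ℝ V (u x₀) (Pi.single i 1) ≤ M / a₀ := by
    intro L hL u hu hpde i x₀ hx₀ hmax
    have hball_nhds : Metric.ball (0 : EuclideanSpace ℝ (Fin n)) L ∈ nhds x₀ :=
      Metric.isOpen_ball.mem_nhds hx₀
    have hcda : ContDiffAt ℝ 2 (fun x => u x i) x₀ :=
      (hu i).contDiffAt (Filter.mem_of_superset hball_nhds Metric.ball_subset_closedBall)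
    have hlm : IsLocalMax (fun x => u x i) x₀ :=
      Filter.eventually_of_mem hball_nhds
        (fun x hx => hmax x (Metric.ball_subset_closedBall hx))
    have hlap := my_laplacian_nonpos hcda hlm
    have hpd := hpde i x₀ hx₀
    have hfb := (abs_le.mp (hf i x₀)).1
    have h1 : a x₀ * fderiv ℝ V (u x₀) (Pi.single i 1) ≤ M := by linarith
    rcases le_or_gt (fderiv ℝ V (u x₀) (Pi.single i 1)) 0 with hVz | hVz
    · exact hVz.trans (le_of_lt (div_pos hM ha₀))
    · have h2 : a₀ * fderiv ℝ V (u x₀) (Pi.single i 1)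
          ≤ a x₀ * fderiv ℝ V (u x₀) (Pi.single i 1) :=
        mul_le_mul_of_nonneg_right (ha x₀) hVz.le
      rw [le_div_iff₀ ha₀]
      nlinarith
  -- interior minimum principle
  have key_min : ∀ L : ℝ, 0 < L →
      ∀ u : EuclideanSpace ℝ (Fin n) → Fin m → ℝ,
      (∀ i : Fin m, ContDiffOn ℝ 2 (fun x => u x i) (Metric.closedBall 0 L)) →
      (∀ i : Fin m, ∀ x ∈ Metric.ball (0 : EuclideanSpace ℝ (Fin n)) L,
        laplacian (fun y => u y i) x - a x * fderiv ℝ V (u x) (Pi.single i 1) = f i x) →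
      ∀ i : Fin m, ∀ x₀ ∈ Metric.ball (0 : EuclideanSpace ℝ (Fin n)) L,
        (∀ x ∈ Metric.closedBall (0 : EuclideanSpace ℝ (Fin n)) L, u x₀ i ≤ u x i) →
        -(M / a₀) ≤ fderiv ℝ V (u x₀) (Pi.single i 1) := by
    intro L hL u hu hpde i x₀ hx₀ hmin
    have hball_nhds : Metric.ball (0 : EuclideanSpace ℝ (Fin n)) L ∈ nhds x₀ :=
      Metric.isOpen_ball.mem_nhds hx₀
    have hcda : ContDiffAt ℝ 2 (fun x => u x i) x₀ :=
      (hu i).contDiffAt (Filter.mem_of_superset hball_nhds Metric.ball_subset_closedBall)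
    have hlm : IsLocalMin (fun x => u x i) x₀ :=
      Filter.eventually_of_mem hball_nhds
        (fun x hx => hmin x (Metric.ball_subset_closedBall hx))
    have hlap := my_laplacian_nonneg hcda hlm
    have hpd := hpde i x₀ hx₀
    have hfb := (abs_le.mp (hf i x₀)).2
    have h1 : -M ≤ a x₀ * fderiv ℝ V (u x₀) (Pi.single i 1) := by linarith
    rcases le_or_gt 0 (fderiv ℝ V (u x₀) (Pi.single i 1)) with hVz | hVz
    · have h0 : (0:ℝ) ≤ M / a₀ := by positivity
      linarith
    · have h2 : a x₀ * fderiv ℝ V (u x₀) (Pi.single i 1)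
          ≤ a₀ * fderiv ℝ V (u x₀) (Pi.single i 1) :=
        mul_le_mul_of_nonpos_right (ha x₀) hVz.le
      rw [neg_le, ← sub_nonneg]
      have h3 : -(fderiv ℝ V (u x₀) (Pi.single i 1)) ≤ M / a₀ := by
        rw [le_div_iff₀ ha₀]
        nlinarith
      linarith
  constructor
  · -- uniform bound
    have hC : (0:ℝ) < M / a₀ + 1 := by positivity
    choose R hR using fun i => hV_inf i (M / a₀ + 1) hC
    haveI : NeZero m := ⟨by omega⟩
    have hne : (Finset.univ : Finset (Fin m)).Nonempty := Finset.univ_nonempty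
    set K₀ := Finset.univ.sup' hne R with hK₀
    have hRK : ∀ i, R i ≤ K₀ := fun i => Finset.le_sup' R (Finset.mem_univ i)
    have hK₀pos : 0 < K₀ := lt_of_lt_of_le (hR ⟨0, by omega⟩).1 (hRK ⟨0, by omega⟩)
    refine ⟨K₀, hK₀pos, ?_⟩
    intro L hL u hu hpde hbd x hx i
    rw [abs_le]
    constructor
    · -- lower bound via minimum
      obtain ⟨z, hz, hminz⟩ := (isCompact_closedBall (0 : EuclideanSpace ℝ (Fin n)) L)
        |>.exists_isMinOn ⟨0, Metric.mem_closedBall_self hL.le⟩ ((hu i).continuousOn)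
      have hxz : u z i ≤ u x i := hminz hx
      suffices h : -K₀ ≤ u z i by linarith
      rcases eq_or_lt_of_le (mem_closedBall_zero_iff.mp hz) with hb | hlt
      · rw [hbd i z hb]; linarith
      · by_contra hcon
        push_neg at hcon
        have hzball : z ∈ Metric.ball (0 : EuclideanSpace ℝ (Fin n)) L :=
          mem_ball_zero_iff.mpr hlt
        have hVge := key_min L hL u hu hpde i z hzball (fun y hy => hminz hy)
        have hVle := ((hR i).2 (u z)).2 (by linarith [hRK i])
        have : M / a₀ + 1 ≤ M / a₀ := by linarith
        linarith
    · -- upper bound via maximum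
      obtain ⟨z, hz, hmaxz⟩ := (isCompact_closedBall (0 : EuclideanSpace ℝ (Fin n)) L)
        |>.exists_isMaxOn ⟨0, Metric.mem_closedBall_self hL.le⟩ ((hu i).continuousOn)
      have hxz : u x i ≤ u z i := hmaxz hx
      suffices h : u z i ≤ K₀ by linarith
      rcases eq_or_lt_of_le (mem_closedBall_zero_iff.mp hz) with hb | hlt
      · rw [hbd i z hb]; linarith
      · by_contra hcon
        push_neg at hcon
        have hzball : z ∈ Metric.ball (0 : EuclideanSpace ℝ (Fin n)) L :=
          mem_ball_zero_iff.mpr hlt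
        have hVle := key L hL u hu hpde i z hzball (fun y hy => hmaxz hy)
        have hVge := ((hR i).2 (u z)).1 (by linarith [hRK i])
        linarith
  · intro L hL u hu hpde hbd i x₀ hx₀ hmax hpos
    exact key L hL u hu hpde i x₀ hx₀ hmax
end
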